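/- arXiv:math/0209242 — 7 statements merged into one kernel-verified Lean document; each statement's English description precedes it below -/
import Mathlib

section
/- Let K be a field and let m, n, k be positive integers with k(m - m/n - 2) ≥ 1 (i.e., k(mn - m - 2n) ≥ n). Let R = K[A,B,C,D,T]/I where I is generated by the 2×2 minors of the matrix with rows (A²+T^m, B, D) and (C, A², B^n - D). Then in R, the element (b^n t^{m-1})^{2mk+1} lies in the ideal (a^{2mk+1}, d^{2mk+1}). -/
open MvPolynomial

set_option maxHeartbeats 1000000

/-- key lemma. Variables: 0=A, 1=B, 2=C, 3=D, 4=T. -/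
theorem stmt0 (K : Type) [Field K] (m n k : ℕ) (hm : 0 < m) (hn : 0 < n) (hk : 0 < k)
    (hineq : (n : ℤ) ≤ (k : ℤ) * ((m : ℤ) * n - m - 2 * n))
    (I : Ideal (MvPolynomial (Fin 5) K))
    (hI : I = Ideal.span
      { (X 0 ^ 2) * (X 0 ^ 2 + X 4 ^ m) - X 1 * X 2,
        (X 0 ^ 2 + X 4 ^ m) * (X 1 ^ n - X 3) - X 2 * X 3,
        X 1 * (X 1 ^ n - X 3) - (X 0 ^ 2) * X 3 })
    (a b d t : MvPolynomial (Fin 5) K ⧸ I)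
    (ha : a = Ideal.Quotient.mk I (X 0)) (hb : b = Ideal.Quotient.mk I (X 1))
    (hd : d = Ideal.Quotient.mk I (X 3)) (ht : t = Ideal.Quotient.mk I (X 4)) :
    (b ^ n * t ^ (m - 1)) ^ (2 * m * k + 1) ∈
      Ideal.span {a ^ (2 * m * k + 1), d ^ (2 * m * k + 1)} := by
  -- m ≥ 3
  have hm3 : 3 ≤ m := by
    by_contra hcon
    push_neg at hcon
    have h2 : (m:ℤ) ≤ 2 := by exact_mod_cast (by omega : m ≤ 2)
    have hn1 : (1:ℤ) ≤ n := by exact_mod_cast hn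
    have hk1 : (1:ℤ) ≤ k := by exact_mod_cast hk
    have key : (m:ℤ)*n - m - 2*n ≤ -1 := by nlinarith [mul_nonneg (by linarith : (0:ℤ) ≤ 2 - m) (by linarith : (0:ℤ) ≤ (n:ℤ) - 1), (by exact_mod_cast hm : (1:ℤ) ≤ m)]
    have key2 : (k:ℤ) * ((m:ℤ)*n - m - 2*n) ≤ (k:ℤ) * (-1) := by
      exact mul_le_mul_of_nonneg_left key (by linarith)
    linarith
  obtain ⟨m', rfl⟩ : ∃ m', m = m' + 3 := ⟨m - 3, by omega⟩
  -- names
  set c : MvPolynomial (Fin 5) K ⧸ I := Ideal.Quotient.mk I (X 2) with hc0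
  -- generator relations
  have z1 : Ideal.Quotient.mk I ((X 0 ^ 2) * (X 0 ^ 2 + X 4 ^ (m'+3)) - X 1 * X 2) = 0 := by
    rw [Ideal.Quotient.eq_zero_iff_mem, hI]
    exact Ideal.subset_span (Set.mem_insert _ _)
  have z2 : Ideal.Quotient.mk I ((X 0 ^ 2 + X 4 ^ (m'+3)) * (X 1 ^ n - X 3) - X 2 * X 3) = 0 := by
    rw [Ideal.Quotient.eq_zero_iff_mem, hI]
    exact Ideal.subset_span (Set.mem_insert_of_mem _ (Set.mem_insert _ _))
  have z3 : Ideal.Quotient.mk I (X 1 * (X 1 ^ n - X 3) - (X 0 ^ 2) * X 3) = 0 := by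
    rw [Ideal.Quotient.eq_zero_iff_mem, hI]
    exact Ideal.subset_span (Set.mem_insert_of_mem _ (Set.mem_insert_of_mem _ rfl))
  simp only [map_sub, map_mul, map_add, map_pow] at z1 z2 z3
  simp only [← ha, ← hb, ← hc0, ← hd, ← ht] at z1 z2 z3
  obtain ⟨u, hu0⟩ : ∃ u' : MvPolynomial (Fin 5) K ⧸ I, u' = a^2 + t^(m'+3) := ⟨_, rfl⟩
  rw [← hu0] at z1 z2
  obtain ⟨v, hv0⟩ : ∃ v' : MvPolynomial (Fin 5) K ⧸ I, v' = u + c := ⟨_, rfl⟩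
  have rel1 : b * c = a^2 * u := by linear_combination -z1
  have rel2 : u * b^n = d * v := by linear_combination z2 - d*hv0
  have rel3 : b^(n+1) = d * (b + a^2) := by linear_combination z3
  -- numeric setup
  rw [show m' + 3 - 1 = m' + 2 from by omega,
      show 2 * (m' + 3) * k + 1 = 2 * ((m'+3)*k) + 1 from by ring]
  obtain ⟨P, hP⟩ : ∃ p : ℕ, p = (m'+3)*k := ⟨_, rfl⟩
  obtain ⟨K0, hK0⟩ : ∃ p : ℕ, p = k*(m'+1) := ⟨_, rfl⟩
  obtain ⟨Y, hY⟩ : ∃ p : ℕ, p = 2*k*(m'+2) := ⟨_, rfl⟩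
  rw [← hP]
  have hYKP : Y = K0 + P := by rw [hY, hK0, hP]; ring
  have hyp2 : n + P ≤ n * K0 := by
    rw [hP, hK0]
    zify
    push_cast at hineq
    nlinarith [hineq]
  -- key lemma LB
  have LB : ∀ Q w E : ℕ, w + E = n*Q → a^(2*w) * u^(w+Q) * b^E = c^w * (d*v)^Q := by
    intro Q w E hwE
    have e1 : a^(2*w) * u^(w+Q) * b^E = (a^2*u)^w * (u^Q * b^E) := by ring
    rw [e1, ← rel1]
    have e2 : (b*c)^w * (u^Q * b^E) = c^w * (u^Q * b^(w+E)) := by rw [pow_add]; ring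
    rw [e2, hwE, pow_mul, ← mul_pow, rel2]
  have L : ∀ q h s : ℕ, h ≤ P → s ≤ n*q →
      a^(2*s) * u^(K0+h) * b^(n*q - s) ∈ Ideal.span {a^(2*h+1), d^q} := by
    intro q
    induction q with
    | zero =>
      intro h s _ _
      rw [Ideal.mem_span_pair]
      exact ⟨0, a^(2*s) * u^(K0+h) * b^(n*0 - s), by ring⟩
    | succ q IH =>
      intro h s hh hs
      have hmul : n*(q+1) = n*q + n := by ring
      rw [hmul] at hs ⊢
      by_cases hsh : h + 1 ≤ s
      · obtain ⟨z, hz⟩ : ∃ z, 2*s = z + (2*h+1) := ⟨2*s - (2*h+1), by omega⟩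
        rw [Ideal.mem_span_pair]
        exact ⟨a^z * u^(K0+h) * b^(n*q + n - s), 0, by rw [hz, pow_add]; ring⟩
      · push_neg at hsh
        have hsh' : s ≤ h := by omega
        by_cases hrec : s + 1 ≤ n*q
        · obtain ⟨e2, he2⟩ : ∃ e2, n*q = s + 1 + e2 := ⟨n*q - (s+1), by omega⟩
          have H1 := IH h s hh (by omega)
          have H2 := IH h (s+1) hh (by omega)
          rw [show n*q - s = e2 + 1 from by omega] at H1
          rw [show n*q - (s+1) = e2 from by omega] at H2
          rw [show n*q + n - s = e2 + 1 + n from by omega]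
          rw [Ideal.mem_span_pair] at H1 H2 ⊢
          obtain ⟨c1, c2, hc12⟩ := H1
          obtain ⟨c3, c4, hc34⟩ := H2
          refine ⟨d*c1 + d*c3, c2 + c4, ?_⟩
          linear_combination d*hc12 + d*hc34 - (a^(2*s) * u^(K0+h) * b^e2) * rel3
        · push_neg at hrec
          have hsq : n*q ≤ s := by omega
          have h6 : n*(q+1) ≤ n*K0 := le_trans (show n*(q+1) ≤ n + P from by rw [hmul]; omega) hyp2
          have hQK : q + 1 ≤ K0 := Nat.le_of_mul_le_mul_left h6 hn
          obtain ⟨w0, hw0⟩ : ∃ w0, s = n*q + w0 := ⟨s - n*q, by omega⟩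
          have hw0n : w0 ≤ n := by omega
          rw [show n*q + n - s = n - w0 from by omega]
          obtain ⟨z, hz⟩ : ∃ z, K0 + h = z + (s + (q+1)) := ⟨K0 + h - (s + (q+1)), by omega⟩
          rw [Ideal.mem_span_pair]
          refine ⟨0, u^z * c^s * v^(q+1), ?_⟩
          have lb := LB (q+1) s (n - w0) (by rw [hmul]; omega)
          rw [hz]
          linear_combination (-(u^z)) * lb
  have hts : t^(m'+3) = u - a^2 := by rw [hu0]; ring
  have key1 : (b^n * t^(m'+2))^(2*P+1) = (u - a^2)^Y * (b^(n*(2*P+1)) * t^(m'+2)) := by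
    rw [← hts, mul_pow, ← pow_mul, ← pow_mul, ← pow_mul]
    rw [show (m'+2)*(2*P+1) = (m'+3)*Y + (m'+2) from by rw [hP, hY]; ring]
    rw [pow_add]
    ring
  rw [key1, sub_eq_add_neg, add_pow, Finset.sum_mul]
  apply Ideal.sum_mem
  intro i hi
  simp only [Finset.mem_range] at hi
  have hiY : i ≤ Y := by omega
  by_cases hiK : i < K0
  · obtain ⟨zz, hzz⟩ : ∃ zz, 2*(Y-i) = zz + (2*P+1) := ⟨2*(Y-i) - (2*P+1), by omega⟩
    rw [Ideal.mem_span_pair]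
    refine ⟨(-1)^(Y-i) * a^zz * u^i * (Y.choose i : MvPolynomial (Fin 5) K ⧸ I) * (b^(n*(2*P+1)) * t^(m'+2)), 0, ?_⟩
    have hnp : (-a^2)^(Y-i) = (-1)^(Y-i) * a^(2*(Y-i)) := by rw [show (-a^2 : MvPolynomial (Fin 5) K ⧸ I) = (-1)*a^2 from by ring, mul_pow, ← pow_mul]
    rw [hnp, hzz, pow_add]
    ring
  · push_neg at hiK
    obtain ⟨h, rfl⟩ : ∃ h, i = K0 + h := ⟨i - K0, by omega⟩
    have hhP : h ≤ P := by omega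
    have Hm := L (2*P+1) h 0 hhP (Nat.zero_le _)
    rw [Nat.sub_zero] at Hm
    rw [Ideal.mem_span_pair] at Hm
    obtain ⟨c1, c2, hc⟩ := Hm
    rw [Ideal.mem_span_pair]
    have hnp : (-a^2)^(Y-(K0+h)) = (-1)^(Y-(K0+h)) * a^(2*(Y-(K0+h))) := by rw [show (-a^2 : MvPolynomial (Fin 5) K ⧸ I) = (-1)*a^2 from by ring, mul_pow, ← pow_mul]
    have hsplit : a^(2*P+1) = a^(2*(Y-(K0+h))) * a^(2*h+1) := by
      rw [← pow_add]
      congr 1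
      omega
    refine ⟨c1 * ((-1)^(Y-(K0+h)) * (Y.choose (K0+h) : MvPolynomial (Fin 5) K ⧸ I) * t^(m'+2)), c2 * ((-1)^(Y-(K0+h)) * a^(2*(Y-(K0+h))) * (Y.choose (K0+h) : MvPolynomial (Fin 5) K ⧸ I) * t^(m'+2)), ?_⟩
    rw [hnp, hsplit]
    linear_combination ((-1)^(Y-(K0+h)) * a^(2*(Y-(K0+h))) * (Y.choose (K0+h) : MvPolynomial (Fin 5) K ⧸ I) * t^(m'+2)) * hc
end

section
/- Let K be a field and n a positive integer. In the polynomial ring K[τ, α, B, C, D], let 𝔞 be the ideal generated by the 2×2 minors of the matrix with rows (τ, B, D) and (C, α, B^n - D). If k, m are positive integers with k(mn - m - 2n) ≥ n, then B^{n(2mk+1)}(τ - α)^{2k(m-1)} ∈ (α^{mk+1}, D^{2mk+1}) + 𝔞. -/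
open MvPolynomial

section helpers

variable {R : Type*} [CommRing R] {J : Ideal R}

private lemma mem_of_sub_mem {x y : R} (h : x - y ∈ J) (hy : y ∈ J) : x ∈ J := by
  have h2 := J.add_mem h hy
  rwa [show x - y + y = x from by ring] at h2

private lemma pow_sub_pow_mem (x y : R) (h : x - y ∈ J) (s : ℕ) : x ^ s - y ^ s ∈ J := by
  obtain ⟨z, hz⟩ : x - y ∣ x ^ s - y ^ s := sub_dvd_pow_sub_pow x y s
  rw [hz]
  exact Ideal.mul_mem_right _ _ h

open Finset in
private lemma roundLemma (t a b c d : R) (n N : ℕ) (J : Ideal R)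
    (hf1 : t * a - b * c ∈ J)
    (hf2 : t * (b ^ n - d) - c * d ∈ J)
    (hf3 : b * (b ^ n - d) - a * d ∈ J)
    (hdN : d ^ N ∈ J) :
    ∀ S x β e (g : R), S + e = N → β ≤ x → (n + 1) * β ≤ n * (x + 1) →
      g * a ^ β ∈ J → g * (t ^ x * b ^ (n * S) * d ^ e) ∈ J := by
  have hsprint : ∀ s : ℕ, t ^ s * b ^ (n * s) - (t + c) ^ s * d ^ s ∈ J := by
    intro s
    have h0 : t * b ^ n - (t + c) * d ∈ J := by
      have he : t * b ^ n - (t + c) * d = t * (b ^ n - d) - c * d := by ring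
      rw [he]; exact hf2
    have h1 := pow_sub_pow_mem (J := J) _ _ h0 s
    have h2 : t ^ s * b ^ (n * s) - (t + c) ^ s * d ^ s
        = (t * b ^ n) ^ s - ((t + c) * d) ^ s := by
      rw [mul_pow, mul_pow, ← pow_mul]
    rw [h2]; exact h1
  have hconv : ∀ q : ℕ, c ^ q * b ^ q - t ^ q * a ^ q ∈ J := by
    intro q
    have h0 : c * b - t * a ∈ J := by
      have he : c * b - t * a = -(t * a - b * c) := by ring
      rw [he]; exact J.neg_mem hf1
    have h1 := pow_sub_pow_mem (J := J) _ _ h0 q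
    have h2 : c ^ q * b ^ q - t ^ q * a ^ q = (c * b) ^ q - (t * a) ^ q := by
      rw [mul_pow, mul_pow]
    rw [h2]; exact h1
  have hrec : ∀ p : ℕ, a ^ p * d ^ p - b ^ p * (b ^ n - d) ^ p ∈ J := by
    intro p
    have h0 : a * d - b * (b ^ n - d) ∈ J := by
      have he : a * d - b * (b ^ n - d) = -(b * (b ^ n - d) - a * d) := by ring
      rw [he]; exact J.neg_mem hf3
    have h1 := pow_sub_pow_mem (J := J) _ _ h0 p
    have h2 : a ^ p * d ^ p - b ^ p * (b ^ n - d) ^ p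
        = (a * d) ^ p - (b * (b ^ n - d)) ^ p := by
      rw [mul_pow, mul_pow]
    rw [h2]; exact h1
  intro S
  induction S using Nat.strong_induction_on with
  | _ S IH =>
    intro x β e g hSe hβx hβn hg
    rcases Nat.eq_zero_or_pos β with hβ0 | hβpos
    · subst hβ0
      rw [pow_zero, mul_one] at hg
      exact Ideal.mul_mem_right _ _ hg
    rcases le_or_gt S x with hSx | hxS
    · -- finish case: sprint everything to d^N
      obtain ⟨x₁, rfl⟩ : ∃ x₁, x = S + x₁ := ⟨x - S, by omega⟩
      have hyJ : t ^ x₁ * ((t + c) ^ S * d ^ S) * d ^ e ∈ J := by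
        have h3 : t ^ x₁ * ((t + c) ^ S * d ^ S) * d ^ e
            = t ^ x₁ * (t + c) ^ S * d ^ N := by
          rw [← hSe, pow_add]; ring
        rw [h3]; exact Ideal.mul_mem_left _ _ hdN
      have hsubJ : t ^ (S + x₁) * b ^ (n * S) * d ^ e
          - t ^ x₁ * ((t + c) ^ S * d ^ S) * d ^ e ∈ J := by
        have h4 : t ^ (S + x₁) * b ^ (n * S) * d ^ e
            - t ^ x₁ * ((t + c) ^ S * d ^ S) * d ^ e
            = (t ^ x₁ * d ^ e) * (t ^ S * b ^ (n * S) - (t + c) ^ S * d ^ S) := by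
          ring
        rw [h4]; exact Ideal.mul_mem_left _ _ (hsprint S)
      exact Ideal.mul_mem_left _ _ (mem_of_sub_mem hsubJ hyJ)
    · -- main case
      obtain ⟨x₁, rfl⟩ : ∃ x₁, x = β + x₁ := ⟨x - β, by omega⟩
      obtain ⟨S₂, rfl⟩ : ∃ S₂, S = β + S₂ := ⟨S - β, by omega⟩
      have hS₂x : x₁ + 1 ≤ S₂ := by omega
      have hb1 : β ≤ n * (x₁ + 1) := by
        have e1 : (n + 1) * β = n * β + β := by ring
        have e2 : n * (β + x₁ + 1) = n * β + n * (x₁ + 1) := by ring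
        omega
      have hb2 : n * (x₁ + 1) ≤ n * S₂ := Nat.mul_le_mul_left _ hS₂x
      obtain ⟨w, hw⟩ : ∃ w, n * S₂ = β + w := ⟨n * S₂ - β, by omega⟩
      suffices hY : g * ((t ^ x₁ * b ^ (n * S₂) * d ^ e) * ((t + c) ^ β * d ^ β)) ∈ J by
        have hsubJ : g * (t ^ (β + x₁) * b ^ (n * (β + S₂)) * d ^ e)
            - g * ((t ^ x₁ * b ^ (n * S₂) * d ^ e) * ((t + c) ^ β * d ^ β)) ∈ J := by
          have h4 : g * (t ^ (β + x₁) * b ^ (n * (β + S₂)) * d ^ e)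
              - g * ((t ^ x₁ * b ^ (n * S₂) * d ^ e) * ((t + c) ^ β * d ^ β))
              = (g * (t ^ x₁ * b ^ (n * S₂) * d ^ e))
                * (t ^ β * b ^ (n * β) - (t + c) ^ β * d ^ β) := by
            ring
          rw [h4]; exact Ideal.mul_mem_left _ _ (hsprint β)
        exact mem_of_sub_mem hsubJ hY
      rw [add_pow]
      simp only [Finset.sum_mul, Finset.mul_sum]
      apply Ideal.sum_mem
      intro i hi
      have hiβ : i ≤ β := Finset.mem_range_succ_iff.mp hi
      obtain ⟨q, hq⟩ : ∃ q, β = i + q := ⟨β - i, by omega⟩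
      have hqe : β - i = q := by omega
      rw [hqe]
      -- term: g * ((t^x₁ * b^(n*S₂) * d^e) * (t^i * c^q * CH * d^β))
      have hbsplit : n * S₂ = q + (i + w) := by omega
      have hZ : (Nat.choose β i : R)
          * (g * (t ^ x₁ * t ^ i * t ^ q * a ^ q * b ^ (i + w) * d ^ (e + β))) ∈ J := by
        rcases Nat.eq_zero_or_pos i with hi0 | hipos
        · -- i = 0 : q = β, direct α^β
          have hqq : q = β := by omega
          have hgq : g * a ^ q ∈ J := by rw [hqq]; exact hg
          have heq : (Nat.choose β i : R)
              * (g * (t ^ x₁ * t ^ i * t ^ q * a ^ q * b ^ (i + w) * d ^ (e + β)))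
              = ((Nat.choose β i : R) * (t ^ x₁ * t ^ i * t ^ q * b ^ (i + w) * d ^ (e + β)))
                * (g * a ^ q) := by ring
          rw [heq]
          exact Ideal.mul_mem_left _ _ hgq
        · -- i ≥ 1 : recycle a^q d^q → b^q (b^n - d)^q then induct
          have hqβ : q + 1 ≤ β := by omega
          have hdsplit : e + β = (e + i) + q := by omega
          have hW : (Nat.choose β i : R)
              * (g * (t ^ x₁ * t ^ i * t ^ q * b ^ (i + w) * d ^ (e + i)
                * (b ^ q * (b ^ n - d) ^ q))) ∈ J := by
            rw [show (b ^ n - d) = b ^ n + -d from by ring, add_pow]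
            simp only [Finset.mul_sum]
            apply Ideal.sum_mem
            intro r hr
            have hrq : r ≤ q := Finset.mem_range_succ_iff.mp hr
            obtain ⟨s, hs⟩ : ∃ s, q = r + s := ⟨q - r, by omega⟩
            have hqr : q - r = s := by omega
            rw [hqr, neg_pow]
            have hrS : S₂ + r < β + S₂ := by omega
            have hse' : (S₂ + r) + (e + i + s) = N := by omega
            have hIH := IH (S₂ + r) hrS (β + x₁) β (e + i + s) g hse' hβx hβn hg
            have hbexp : n * (S₂ + r) = (i + w) + q + n * r := by
              have e3 : n * (S₂ + r) = n * S₂ + n * r := by ring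
              omega
            refine mem_of_sub_mem (x := ?_) (y := ((-1 : R) ^ s * (Nat.choose β i : R)
              * (Nat.choose q r : R))
              * (g * (t ^ (β + x₁) * b ^ (n * (S₂ + r)) * d ^ (e + i + s)))) ?_ ?_
            · have heq2 : (Nat.choose β i : R)
                  * (g * (t ^ x₁ * t ^ i * t ^ q * b ^ (i + w) * d ^ (e + i)
                    * (b ^ q * ((b ^ n) ^ r * ((-1 : R) ^ s * d ^ s) * (Nat.choose q r : R)))))
                  - ((-1 : R) ^ s * (Nat.choose β i : R) * (Nat.choose q r : R))
                    * (g * (t ^ (β + x₁) * b ^ (n * (S₂ + r)) * d ^ (e + i + s))) = 0 := by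
                rw [hbexp, show β + x₁ = x₁ + i + q from by omega]
                ring
              rw [heq2]
              exact J.zero_mem
            · exact Ideal.mul_mem_left _ _ hIH
          -- Y - W ∈ J via hrec
          have hYW : (Nat.choose β i : R)
              * (g * (t ^ x₁ * t ^ i * t ^ q * a ^ q * b ^ (i + w) * d ^ (e + β)))
              - (Nat.choose β i : R)
                * (g * (t ^ x₁ * t ^ i * t ^ q * b ^ (i + w) * d ^ (e + i)
                  * (b ^ q * (b ^ n - d) ^ q))) ∈ J := by
            have h6 : (Nat.choose β i : R)
                * (g * (t ^ x₁ * t ^ i * t ^ q * a ^ q * b ^ (i + w) * d ^ (e + β)))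
                - (Nat.choose β i : R)
                  * (g * (t ^ x₁ * t ^ i * t ^ q * b ^ (i + w) * d ^ (e + i)
                    * (b ^ q * (b ^ n - d) ^ q)))
                = ((Nat.choose β i : R) * (g * (t ^ x₁ * t ^ i * t ^ q * b ^ (i + w) * d ^ (e + i))))
                  * (a ^ q * d ^ q - b ^ q * (b ^ n - d) ^ q) := by
              rw [hdsplit, pow_add]
              ring
            rw [h6]; exact Ideal.mul_mem_left _ _ (hrec q)
          exact mem_of_sub_mem hYW hW
      -- term - Z ∈ J via hconv
      have hTZ : g * ((t ^ x₁ * b ^ (n * S₂) * d ^ e) * (t ^ i * c ^ q * (Nat.choose β i : R) * d ^ β))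
          - (Nat.choose β i : R)
            * (g * (t ^ x₁ * t ^ i * t ^ q * a ^ q * b ^ (i + w) * d ^ (e + β))) ∈ J := by
        have h7 : g * ((t ^ x₁ * b ^ (n * S₂) * d ^ e) * (t ^ i * c ^ q * (Nat.choose β i : R) * d ^ β))
            - (Nat.choose β i : R)
              * (g * (t ^ x₁ * t ^ i * t ^ q * a ^ q * b ^ (i + w) * d ^ (e + β)))
            = ((Nat.choose β i : R) * (g * (t ^ x₁ * t ^ i * b ^ (i + w) * d ^ (e + β))))
              * (c ^ q * b ^ q - t ^ q * a ^ q) := by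
          rw [hbsplit, pow_add]
          ring
        rw [h7]; exact Ideal.mul_mem_left _ _ (hconv q)
      exact mem_of_sub_mem hTZ hZ

end helpers

/-- in K[τ,α,B,C,D] (variables 0=τ, 1=α, 2=B, 3=C, 4=D), with 𝔞 the ideal of
2×2 minors of ((τ, B, D), (C, α, Bⁿ-D)), if k(mn-m-2n) ≥ n then
B^{n(2mk+1)}(τ-α)^{2k(m-1)} ∈ (α^{mk+1}, D^{2mk+1}) + 𝔞. -/
theorem stmt1 (K : Type) [Field K] (m n k : ℕ) (hm : 0 < m) (hn : 0 < n) (hk : 0 < k)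
    (hineq : (n : ℤ) ≤ (k : ℤ) * ((m : ℤ) * n - m - 2 * n))
    (𝔞 : Ideal (MvPolynomial (Fin 5) K))
    (h𝔞 : 𝔞 = Ideal.span
      { X 0 * X 1 - X 2 * X 3,
        X 0 * (X 2 ^ n - X 4) - X 3 * X 4,
        X 2 * (X 2 ^ n - X 4) - X 1 * X 4 }) :
    (X 2 : MvPolynomial (Fin 5) K) ^ (n * (2 * m * k + 1)) * (X 0 - X 1) ^ (2 * k * (m - 1)) ∈
      Ideal.span {(X 1 : MvPolynomial (Fin 5) K) ^ (m * k + 1), X 4 ^ (2 * m * k + 1)} + 𝔞 := by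
  subst h𝔞
  -- translate the hypothesis to ℕ
  have key' : n + k * m + 2 * (k * n) ≤ k * m * n := by
    have h : ((n : ℤ) + k * m + 2 * (k * n)) ≤ ((k : ℤ) * m * n) := by nlinarith [hineq]
    exact_mod_cast h
  have hm3 : 3 ≤ m := by
    by_contra hcon
    push_neg at hcon
    interval_cases m <;> nlinarith [key', hn, hk]
  obtain ⟨m₁, rfl⟩ : ∃ m₁, m = m₁ + 3 := ⟨m - 3, by omega⟩
  rw [show m₁ + 3 - 1 = m₁ + 2 from by omega]
  -- define P
  have hP1 : 0 < k * (m₁ + 1) := by positivity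
  obtain ⟨P, hP⟩ : ∃ P, k * (m₁ + 1) = P + 1 := ⟨k * (m₁ + 1) - 1, by omega⟩
  have hPM : P + ((m₁ + 3) * k + 1) = 2 * k * (m₁ + 2) := by
    have e1 : k * (m₁ + 1) = k * m₁ + k := by ring
    have e2 : (m₁ + 3) * k = k * m₁ + 3 * k := by ring
    have e3 : 2 * k * (m₁ + 2) = 2 * (k * m₁) + 4 * k := by ring
    linarith
  have hMnP : (m₁ + 3) * k + 1 ≤ n * P + n := by
    have e4 : n * (k * (m₁ + 1)) = n * (P + 1) := by rw [hP]
    have e5 : n * (k * (m₁ + 1)) = k * m₁ * n + k * n := by ring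
    have e6 : n * (P + 1) = n * P + n := by ring
    have e7 : k * (m₁ + 3) * n = k * m₁ * n + 3 * (k * n) := by ring
    have e8 : k * (m₁ + 3) = k * m₁ + 3 * k := by ring
    linarith [key', hn, hk]
  -- abstract the three exponent quantities
  revert hPM hMnP
  generalize hMM : (m₁ + 3) * k + 1 = MM
  generalize hEE : 2 * k * (m₁ + 2) = EE
  generalize hNN : 2 * (m₁ + 3) * k + 1 = NN
  intro hPM hMnP
  -- reduce to the 5-generator span
  suffices h5 : (X 2 : MvPolynomial (Fin 5) K) ^ (n * NN) * (X 0 - X 1) ^ EE ∈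
      Ideal.span {(X 1 : MvPolynomial (Fin 5) K) ^ MM, X 4 ^ NN,
        X 0 * X 1 - X 2 * X 3,
        X 0 * (X 2 ^ n - X 4) - X 3 * X 4,
        X 2 * (X 2 ^ n - X 4) - X 1 * X 4} by
    have hle : Ideal.span {(X 1 : MvPolynomial (Fin 5) K) ^ MM, X 4 ^ NN,
        X 0 * X 1 - X 2 * X 3,
        X 0 * (X 2 ^ n - X 4) - X 3 * X 4,
        X 2 * (X 2 ^ n - X 4) - X 1 * X 4} ≤
        Ideal.span {(X 1 : MvPolynomial (Fin 5) K) ^ MM, X 4 ^ NN} +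
        Ideal.span {X 0 * X 1 - X 2 * X 3,
          X 0 * (X 2 ^ n - X 4) - X 3 * X 4,
          X 2 * (X 2 ^ n - X 4) - X 1 * X 4} := by
      rw [Ideal.span_le]
      rintro x hx
      simp only [Set.mem_insert_iff, Set.mem_singleton_iff] at hx
      rw [Submodule.add_eq_sup]
      rcases hx with rfl | rfl | rfl | rfl | rfl
      · exact Submodule.mem_sup_left (Ideal.subset_span (by simp))
      · exact Submodule.mem_sup_left (Ideal.subset_span (by simp))
      · exact Submodule.mem_sup_right (Ideal.subset_span (by simp))
      · exact Submodule.mem_sup_right (Ideal.subset_span (by simp))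
      · exact Submodule.mem_sup_right (Ideal.subset_span (by simp))
    exact hle h5
  set J : Ideal (MvPolynomial (Fin 5) K) := Ideal.span {(X 1 : MvPolynomial (Fin 5) K) ^ MM,
    X 4 ^ NN,
    X 0 * X 1 - X 2 * X 3,
    X 0 * (X 2 ^ n - X 4) - X 3 * X 4,
    X 2 * (X 2 ^ n - X 4) - X 1 * X 4} with hJ
  have haM : (X 1 : MvPolynomial (Fin 5) K) ^ MM ∈ J := Ideal.subset_span (by simp)
  have hdN : (X 4 : MvPolynomial (Fin 5) K) ^ NN ∈ J := Ideal.subset_span (by simp)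
  have hf1 : (X 0 : MvPolynomial (Fin 5) K) * X 1 - X 2 * X 3 ∈ J := Ideal.subset_span (by simp)
  have hf2 : (X 0 : MvPolynomial (Fin 5) K) * (X 2 ^ n - X 4) - X 3 * X 4 ∈ J :=
    Ideal.subset_span (by simp)
  have hf3 : (X 2 : MvPolynomial (Fin 5) K) * (X 2 ^ n - X 4) - X 1 * X 4 ∈ J :=
    Ideal.subset_span (by simp)
  -- binomial expansion of (τ - α)^EE
  rw [sub_eq_add_neg, add_pow, Finset.mul_sum]
  apply Ideal.sum_mem
  intro l hl
  have hlE : l ≤ EE := Finset.mem_range_succ_iff.mp hl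
  rcases le_or_gt l P with hlP | hlP
  · -- low τ-degree: the α-power is at least MM
    obtain ⟨c₀, hc₀⟩ : ∃ c₀, EE - l = MM + c₀ := ⟨P - l, by omega⟩
    rw [hc₀]
    have heq : (X 2 : MvPolynomial (Fin 5) K) ^ (n * NN)
        * (X 0 ^ l * (-X 1) ^ (MM + c₀) * (Nat.choose EE l : MvPolynomial (Fin 5) K))
        = ((X 2 : MvPolynomial (Fin 5) K) ^ (n * NN) * X 0 ^ l * (-1) ^ (MM + c₀) * X 1 ^ c₀
          * (Nat.choose EE l : MvPolynomial (Fin 5) K)) * X 1 ^ MM := by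
      rw [neg_pow]
      ring
    rw [heq]
    exact Ideal.mul_mem_left _ _ haM
  · -- high τ-degree: apply the round lemma with β = l - P
    obtain ⟨β, hlβ⟩ : ∃ β, l = P + β := ⟨l - P, by omega⟩
    have hβM : β ≤ MM := by omega
    have hcond : (n + 1) * β ≤ n * (l + 1) := by
      have r1 : n * (l + 1) = n * P + n * β + n := by rw [hlβ]; ring
      have r2 : (n + 1) * β = n * β + β := by ring
      have r3 : n * β ≤ n * β := le_refl _
      linarith [hMnP, hβM]
    have hga : ((-X 1 : MvPolynomial (Fin 5) K) ^ (EE - l)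
        * (Nat.choose EE l : MvPolynomial (Fin 5) K)) * X 1 ^ β ∈ J := by
      have hc : EE - l + β = MM := by omega
      have heq : ((-X 1 : MvPolynomial (Fin 5) K) ^ (EE - l)
          * (Nat.choose EE l : MvPolynomial (Fin 5) K)) * X 1 ^ β
          = ((-1 : MvPolynomial (Fin 5) K) ^ (EE - l)
            * (Nat.choose EE l : MvPolynomial (Fin 5) K)) * X 1 ^ MM := by
        rw [neg_pow, ← hc, pow_add]
        ring
      rw [heq]
      exact Ideal.mul_mem_left _ _ haM
    have hr := roundLemma (X 0 : MvPolynomial (Fin 5) K) (X 1) (X 2) (X 3) (X 4) n NN J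
      hf1 hf2 hf3 hdN NN l β 0
      ((-X 1 : MvPolynomial (Fin 5) K) ^ (EE - l) * (Nat.choose EE l : MvPolynomial (Fin 5) K))
      (by omega) (by omega) hcond hga
    have heq2 : (X 2 : MvPolynomial (Fin 5) K) ^ (n * NN)
        * (X 0 ^ l * (-X 1) ^ (EE - l) * (Nat.choose EE l : MvPolynomial (Fin 5) K))
        = ((-X 1 : MvPolynomial (Fin 5) K) ^ (EE - l)
          * (Nat.choose EE l : MvPolynomial (Fin 5) K)) * (X 0 ^ l * X 2 ^ (n * NN) * X 4 ^ 0) := by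
      ring
    rw [heq2]
    exact hr
end

section
/- Let K be a field of characteristic p > 2 and let m, n be positive integers with m - m/n > 2. Let R = K[A,B,C,D,T]/I where I is generated by the 2×2 minors of the matrix with rows (A²+T^m, B, D) and (C, A², B^n - D). Then b^n t^{m-1} ∉ (a, d) in R. -/
open MvPolynomial

lemma key (K : Type) [Field K] (m n : ℕ) (hm : 0 < m) :
    (X 1 : MvPolynomial (Fin 5) K) ^ n * X 4 ^ (m - 1) ∉
      Ideal.span {X 1 * X 2, X 1 ^ n * X 4 ^ m, X 1 ^ (n + 1)} := by
  intro h
  set μ : Fin 5 →₀ ℕ := Finsupp.single 1 n + Finsupp.single 4 (m - 1) with hμ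
  rw [Ideal.mem_span_insert] at h
  obtain ⟨r1, w1, hw1, heq⟩ := h
  rw [Ideal.mem_span_insert] at hw1
  obtain ⟨r2, w2, hw2, heq2⟩ := hw1
  rw [Ideal.mem_span_singleton] at hw2
  obtain ⟨r3, rfl⟩ := hw2
  subst heq2
  have hx12 : (X 1 : MvPolynomial (Fin 5) K) * X 2
      = monomial (Finsupp.single 1 1 + Finsupp.single 2 1) 1 := by
    rw [show (X 1 : MvPolynomial (Fin 5) K) * X 2 = X 1 ^ 1 * X 2 ^ 1 by ring,
      X_pow_eq_monomial, X_pow_eq_monomial, monomial_mul, one_mul]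
  have hx14 : (X 1 : MvPolynomial (Fin 5) K) ^ n * X 4 ^ m
      = monomial (Finsupp.single 1 n + Finsupp.single 4 m) 1 := by
    rw [X_pow_eq_monomial, X_pow_eq_monomial, monomial_mul, one_mul]
  have hx1 : (X 1 : MvPolynomial (Fin 5) K) ^ (n + 1)
      = monomial (Finsupp.single 1 (n + 1)) 1 := X_pow_eq_monomial
  have hc := congrArg (coeff μ) heq
  rw [show (X 1 : MvPolynomial (Fin 5) K) ^ n * X 4 ^ (m - 1) = monomial μ 1 by
      rw [X_pow_eq_monomial, X_pow_eq_monomial, monomial_mul, one_mul],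
    coeff_monomial, if_pos rfl, coeff_add, coeff_add, hx12, hx14,
    mul_comm ((X 1 : MvPolynomial (Fin 5) K) ^ (n+1)) r3, hx1,
    coeff_mul_monomial', coeff_mul_monomial', coeff_mul_monomial'] at hc
  rw [if_neg, if_neg, if_neg] at hc
  · simp at hc
  · intro hle
    have := hle 1
    simp [hμ, Finsupp.single_apply] at this
  · intro hle
    have := hle 4
    simp [hμ, Finsupp.single_apply] at this
    omega
  · intro hle
    have := hle 2
    simp [hμ, Finsupp.single_apply] at this

/-- with char K = p > 2 and mn - m - 2n > 0, in R = K[A,B,C,D,T]/I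
(variables 0=A, 1=B, 2=C, 3=D, 4=T) we have bⁿt^{m-1} ∉ (a, d). -/
theorem stmt3 (K : Type) [Field K] (p : ℕ) [Fact p.Prime] [CharP K p] (hp : 2 < p)
    (m n : ℕ) (hm : 0 < m) (hn : 0 < n) (hmn : m + 2 * n < m * n)
    (I : Ideal (MvPolynomial (Fin 5) K))
    (hI : I = Ideal.span
      { (X 0 ^ 2) * (X 0 ^ 2 + X 4 ^ m) - X 1 * X 2,
        (X 0 ^ 2 + X 4 ^ m) * (X 1 ^ n - X 3) - X 2 * X 3,
        X 1 * (X 1 ^ n - X 3) - (X 0 ^ 2) * X 3 })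
    (a b d t : MvPolynomial (Fin 5) K ⧸ I)
    (ha : a = Ideal.Quotient.mk I (X 0)) (hb : b = Ideal.Quotient.mk I (X 1))
    (hd : d = Ideal.Quotient.mk I (X 3)) (ht : t = Ideal.Quotient.mk I (X 4)) :
    b ^ n * t ^ (m - 1) ∉ Ideal.span {a, d} := by
  intro h
  rw [ha, hb, hd, ht, Ideal.mem_span_pair] at h
  obtain ⟨u, v, huv⟩ := h
  obtain ⟨u', rfl⟩ := Ideal.Quotient.mk_surjective u
  obtain ⟨v', rfl⟩ := Ideal.Quotient.mk_surjective v
  have hmem : u' * X 0 + v' * X 3 - X 1 ^ n * X 4 ^ (m - 1) ∈ I := by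
    rw [← Ideal.Quotient.eq_zero_iff_mem, map_sub, map_add, map_mul, map_mul,
      map_mul, map_pow, map_pow, huv, sub_self]
  -- substitution X0 ↦ 0, X3 ↦ 0
  set φ : MvPolynomial (Fin 5) K →ₐ[K] MvPolynomial (Fin 5) K :=
    aeval ![0, X 1, X 2, 0, X 4] with hφ
  have h2 := Ideal.mem_map_of_mem φ hmem
  rw [hI, Ideal.map_span, Set.image_insert_eq, Set.image_insert_eq,
    Set.image_singleton] at h2
  have e1 : φ ((X 0 ^ 2) * (X 0 ^ 2 + X 4 ^ m) - X 1 * X 2) = -(X 1 * X 2) := by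
    simp [hφ]
  have e2 : φ ((X 0 ^ 2 + X 4 ^ m) * (X 1 ^ n - X 3) - X 2 * X 3)
      = X 1 ^ n * X 4 ^ m := by
    simp [hφ]; ring
  have e3 : φ (X 1 * (X 1 ^ n - X 3) - (X 0 ^ 2) * X 3) = X 1 ^ (n + 1) := by
    simp [hφ]; ring
  have e0 : φ (u' * X 0 + v' * X 3 - X 1 ^ n * X 4 ^ (m - 1))
      = -(X 1 ^ n * X 4 ^ (m - 1)) := by
    simp [hφ]
  rw [e0, e1, e2, e3] at h2
  replace h2 := neg_mem h2
  rw [neg_neg] at h2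
  have hle : Ideal.span ({-(X 1 * X 2), X 1 ^ n * X 4 ^ m, X 1 ^ (n + 1)} :
      Set (MvPolynomial (Fin 5) K)) ≤
      Ideal.span {X 1 * X 2, X 1 ^ n * X 4 ^ m, X 1 ^ (n + 1)} := by
    rw [Ideal.span_le]
    rintro x (rfl | rfl | rfl)
    · exact neg_mem (Ideal.subset_span (Set.mem_insert _ _))
    · exact Ideal.subset_span (by simp)
    · exact Ideal.subset_span (by simp)
  exact key K m n hm (hle h2)
end

section
/- Let K be a field and m, n positive integers. With R = K[A,B,C,D,T]/I as above (I generated by the 2×2 minors of the matrix with rows (A²+T^m, B, D), (C, A², B^n - D)), the element t is a nonzerodivisor on R. -/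
/-!
`I` is generated by the 2 × 2 minors of `[[A² + Tᵐ, B, D], [C, A², Bⁿ - D]]`, and the two rows of a
2 × 3 matrix are always syzygies of its minors. If `T f = a Δ₁₂ + b Δ₁₃ + c Δ₂₃`, setting `T = 0`
turns `(a, b, c)` into a syzygy of the minors of the specialized matrix. There `Δ₁₂ = A⁴ - BC` is
prime and does not divide `Δ₂₃`, and a Koszul-type argument shows that every syzygy is then a
combination of the rows. Lifting that combination back, `(a, b, c)` is congruent modulo `T` to a
syzygy of the original minors, and cancelling `T` puts `f` in `I`.
-/

open MvPolynomial

theorem Prime.exists_of_mul_add_mul_eq_zero {R : Type*} [CommRing R] [IsDomain R] {p q a b : R}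
    (hp : Prime p) (hpq : ¬p ∣ q) (h : a * p + b * q = 0) : ∃ w, a = w * q ∧ b = -(w * p) := by
  obtain ⟨w, rfl⟩ :=
    (hp.dvd_or_dvd (a := b) (b := q) ⟨-a, by linear_combination h⟩).resolve_right hpq
  refine ⟨-w, mul_right_cancel₀ hp.ne_zero ?_, by ring⟩
  linear_combination h

/-- `v * x - y * u`, `x * w - u * z`, `y * w - v * z` are the minors of `[[x, y, z], [u, v, w]]`;
its rows give the syzygies `(z, -y, x)` and `(w, -v, u)` (expand a 3 × 3 determinant with a
repeated row). -/
theorem exists_rows_combination_of_minors_syzygy {R : Type*} [CommRing R] [IsDomain R]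
    {x y z u v w a b c : R} (hprime : Prime (v * x - y * u))
    (hndvd : ¬(v * x - y * u) ∣ y * w - v * z)
    (h : a * (v * x - y * u) + b * (x * w - u * z) + c * (y * w - v * z) = 0) :
    ∃ α β, a = α * z + β * w ∧ b = -(α * y + β * v) ∧ c = α * x + β * u := by
  obtain ⟨w₁, h₁a, h₁c⟩ := hprime.exists_of_mul_add_mul_eq_zero hndvd
    (a := y * a + z * b) (b := x * b + y * c) (by linear_combination y * h)
  obtain ⟨w₂, h₂a, h₂c⟩ := hprime.exists_of_mul_add_mul_eq_zero hndvd
    (a := v * a + w * b) (b := u * b + v * c) (by linear_combination v * h)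
  have hΔ₂₃ : y * w - v * z ≠ 0 := fun h0 ↦ hndvd (h0 ▸ dvd_zero _)
  refine ⟨-w₂, w₁, mul_left_cancel₀ hΔ₂₃ ?_, mul_left_cancel₀ hprime.ne_zero ?_,
    mul_left_cancel₀ hprime.ne_zero ?_⟩
  · linear_combination w * h₁a - z * h₂a
  · linear_combination v * h₁c - y * h₂c
  · linear_combination x * h₂c - u * h₁c

theorem mem_of_mul_mem_span_minors {R : Type*} [CommRing R] [IsDomain R] (σ : R →+* R)
    {t x y z u v w f : R} (ht : t ≠ 0) (hσt : σ t = 0) (hσ : ∀ p, t ∣ p - σ p)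
    (hprime : Prime (σ v * σ x - σ y * σ u))
    (hndvd : ¬(σ v * σ x - σ y * σ u) ∣ σ y * σ w - σ v * σ z)
    (hf : t * f ∈ Ideal.span {v * x - y * u, x * w - u * z, y * w - v * z}) :
    f ∈ Ideal.span {v * x - y * u, x * w - u * z, y * w - v * z} := by
  obtain ⟨a, b, c, habc⟩ := Submodule.mem_span_triple.mp hf
  simp only [smul_eq_mul] at habc
  obtain ⟨α, β, hσa, hσb, hσc⟩ := exists_rows_combination_of_minors_syzygy hprime hndvd
    (a := σ a) (b := σ b) (c := σ c) (by simpa [hσt, eq_comm] using congr(σ $habc))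
  have lift : ∀ p r s, σ p = α * σ r + β * σ s → t ∣ p - (α * r + β * s) := by
    intro p r s hp
    convert ((hσ p).sub ((hσ r).mul_left α)).sub ((hσ s).mul_left β) using 1
    rw [hp]; ring
  obtain ⟨a₁, ha₁⟩ := lift a z w hσa
  obtain ⟨b₁, hb₁⟩ := lift (-b) y v (by rw [map_neg, hσb, neg_neg])
  obtain ⟨c₁, hc₁⟩ := lift c x u hσc
  have hf₁ : f = a₁ * (v * x - y * u) - b₁ * (x * w - u * z) + c₁ * (y * w - v * z) := by
    refine mul_left_cancel₀ ht ?_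
    linear_combination -habc + (v * x - y * u) * ha₁ - (x * w - u * z) * hb₁ +
      (y * w - v * z) * hc₁
  rw [hf₁]
  refine Ideal.add_mem _ (Ideal.sub_mem _ ?_ ?_) ?_ <;>
    exact Ideal.mul_mem_left _ _ (Ideal.subset_span (by simp))

theorem Ideal.Quotient.mk_mem_nonZeroDivisors {R : Type*} [CommRing R] {J : Ideal R} {t : R}
    (h : ∀ f, t * f ∈ J → f ∈ J) : Ideal.Quotient.mk J t ∈ nonZeroDivisors (R ⧸ J) := by
  rw [mem_nonZeroDivisors_iff_left]
  intro x hx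
  obtain ⟨f, rfl⟩ := Ideal.Quotient.mk_surjective x
  rw [← map_mul, Ideal.Quotient.eq_zero_iff_mem] at hx
  rw [Ideal.Quotient.eq_zero_iff_mem]
  exact h f hx

theorem MvPolynomial.X_dvd_sub_aeval_update_zero {σ R : Type*} [CommRing R] [DecidableEq σ]
    (i : σ) (p : MvPolynomial σ R) : X i ∣ p - aeval (Function.update X i 0) p := by
  rw [← Ideal.mem_span_singleton, ← Ideal.Quotient.eq]
  have : (Ideal.Quotient.mkₐ R (Ideal.span {X i})).comp (aeval (Function.update X i 0)) =
      Ideal.Quotient.mkₐ R _ := by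
    ext j
    by_cases hj : j = i
    · subst hj
      simp
    · simp [hj]
  exact congr($this p).symm

/-- `A⁴ - BC` is linear in `C` with coprime coefficients `-B` and `A⁴`. -/
theorem MvPolynomial.prime_X_sq_mul_X_sq_sub_X_mul_X (R : Type*) [CommRing R] [IsDomain R]
    [UniqueFactorizationMonoid R] :
    Prime (X 0 ^ 2 * X 0 ^ 2 - X 1 * X 2 : MvPolynomial (Fin 5) R) := by
  let e := (renameEquiv R (Equiv.swap (0 : Fin 5) 2)).trans (finSuccEquiv R 4)
  have he : e (X 0 ^ 2 * X 0 ^ 2 - X 1 * X 2) =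
      Polynomial.C (-X 0) * Polynomial.X + Polynomial.C (X 1 ^ 4) := by
    have e0 : e (X 0) = Polynomial.C (X 1) := by
      simp only [e, AlgEquiv.trans_apply, renameEquiv_apply, rename_X, Equiv.swap_apply_left]
      exact finSuccEquiv_X_succ (j := 1)
    have e1 : e (X 1) = Polynomial.C (X 0) := by
      simp only [e, AlgEquiv.trans_apply, renameEquiv_apply, rename_X,
        Equiv.swap_apply_of_ne_of_ne (a := (0 : Fin 5)) (b := 2) (x := 1) (by decide) (by decide)]
      exact finSuccEquiv_X_succ (j := 0)
    have e2 : e (X 2) = Polynomial.X := by simp [e, finSuccEquiv_X_zero]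
    simp only [map_sub, map_mul, map_pow, e0, e1, e2, map_neg]
    ring
  have hrel : IsRelPrime (-X 0) (X 1 ^ 4 : MvPolynomial (Fin 4) R) :=
    ((X_prime.irreducible.isRelPrime_iff_not_dvd).mpr (by simp)).pow_right.neg_left
  refine (MulEquiv.prime_iff e.toMulEquiv).mp ?_
  change Prime (e _)
  rw [he, ← UniqueFactorizationMonoid.irreducible_iff_prime]
  exact Polynomial.irreducible_C_mul_X_add_C (neg_ne_zero.mpr (X_ne_zero 0)) hrel

/-- Variables: `X 0 = A`, `X 1 = B`, `X 2 = C`, `X 3 = D`, `X 4 = T`. -/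
theorem stmt9_general (K : Type) [Field K] (m n : ℕ) (hm : 0 < m)
    (I : Ideal (MvPolynomial (Fin 5) K))
    (hI : I = Ideal.span
      { (X 0 ^ 2) * (X 0 ^ 2 + X 4 ^ m) - X 1 * X 2,
        (X 0 ^ 2 + X 4 ^ m) * (X 1 ^ n - X 3) - X 2 * X 3,
        X 1 * (X 1 ^ n - X 3) - (X 0 ^ 2) * X 3 })
    (t : MvPolynomial (Fin 5) K ⧸ I) (ht : t = Ideal.Quotient.mk I (X 4)) :
    t ∈ nonZeroDivisors (MvPolynomial (Fin 5) K ⧸ I) := by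
  subst hI ht
  let σ := aeval (R := K) (Function.update (X : Fin 5 → MvPolynomial (Fin 5) K) 4 0)
  have hndvd : ¬(X 0 ^ 2 * X 0 ^ 2 - X 1 * X 2 : MvPolynomial (Fin 5) K) ∣
      X 1 * (X 1 ^ n - X 3) - X 0 ^ 2 * X 3 := fun h ↦ by
    simpa using map_dvd (aeval (fun i : Fin 5 ↦ if i = 1 then (1 : K) else 0)) h
  refine Ideal.Quotient.mk_mem_nonZeroDivisors fun f ↦
    mem_of_mul_mem_span_minors σ.toRingHom (X_ne_zero 4) (by simp [σ])
      (X_dvd_sub_aeval_update_zero 4) ?_ ?_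
  · simpa [σ, hm.ne'] using prime_X_sq_mul_X_sq_sub_X_mul_X K
  · simpa [σ, hm.ne'] using hndvd

/-- t is a nonzerodivisor on R = K[A,B,C,D,T]/I
(variables 0=A, 1=B, 2=C, 3=D, 4=T). -/
theorem stmt9 (K : Type) [Field K] (m n : ℕ) (hm : 0 < m) (hn : 0 < n)
    (I : Ideal (MvPolynomial (Fin 5) K))
    (hI : I = Ideal.span
      { (X 0 ^ 2) * (X 0 ^ 2 + X 4 ^ m) - X 1 * X 2,
        (X 0 ^ 2 + X 4 ^ m) * (X 1 ^ n - X 3) - X 2 * X 3,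
        X 1 * (X 1 ^ n - X 3) - (X 0 ^ 2) * X 3 })
    (t : MvPolynomial (Fin 5) K ⧸ I) (ht : t = Ideal.Quotient.mk I (X 4)) :
    t ∈ nonZeroDivisors (MvPolynomial (Fin 5) K ⧸ I) :=
  stmt9_general K m n hm I hI t ht
end

section
/- Let K be a field of characteristic p > 2 and m, n positive integers, R = K[A,B,C,D,T]/I as above, and P = (a, b, c, d) ⊆ R. Then R_P is isomorphic to the localization of the hypersurface K[T,A,B,C]/(A²(A² + T^m) - BC) at the prime (a, b, c); in particular d = b^n(a² + t^m)/(c + a² + t^m) in R_P. -/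
/-!
Let `φ : S → R` send `(T, A, B, C)` to `(t, a, b, c)`; it respects the hypersurface equation
because that equation is the first minor. The map `R → S` killing `a, b, c, d` and sending `t` to
`T` undoes `φ` modulo `P'`, which gives `φ⁻¹(P) = P'`, so `φ` localizes to `S_{P'} → R_P`.
Conversely, the second minor says `d (c + a² + tᵐ) = bⁿ(a² + tᵐ)`, and `c + a² + tᵐ ∉ P'`
(it is `1` at `T = 1, A = B = C = 0`). Sending `d` to the fraction `bⁿ(a² + tᵐ)/(c + a² + tᵐ)`
in `S_{P'}` kills all three minors: the third one is a combination of the first two once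
multiplied by that unit. The two maps are inverse to each other because they are on generators.
-/

open MvPolynomial

section LocalAlgEquiv

variable {K R S : Type*} [CommRing K] [CommRing R] [CommRing S] [Algebra K R] [Algebra K S]
  {P : Ideal R} [P.IsPrime] {Q : Ideal S} [Q.IsPrime]

noncomputable def Localization.localAlgEquivOfComp (φ : S →ₐ[K] R) (hQ : Q = P.comap φ)
    (f : R →ₐ[K] Localization.AtPrime Q)
    (hfφ : f.comp φ = IsScalarTower.toAlgHom K S _)
    (hφf : (Localization.localAlgHom Q P φ hQ).comp f = IsScalarTower.toAlgHom K R _) :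
    Localization.AtPrime P ≃ₐ[K] Localization.AtPrime Q :=
  have hunit (y : P.primeCompl) : IsUnit (f y) := by
    -- `localAlgHom` is local and sends `f y` to the unit `y`
    have := Localization.isLocalHom_localRingHom Q P φ.toRingHom hQ
    apply IsUnit.of_map (Localization.localRingHom Q P φ.toRingHom hQ)
    rw [← Localization.localAlgHom_apply, ← AlgHom.comp_apply, hφf]
    exact (IsLocalization.AtPrime.isUnit_to_map_iff _ P _).2 y.2
  AlgEquiv.ofAlgHom (IsLocalization.liftAlgHom (M := P.primeCompl) hunit)
    (Localization.localAlgHom Q P φ hQ)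
    (IsLocalization.algHom_ext Q.primeCompl <| AlgHom.ext fun s =>
      show IsLocalization.liftAlgHom hunit
          (Localization.localAlgHom Q P φ hQ (algebraMap S _ s)) = algebraMap S _ s by
        simpa [IsLocalization.liftAlgHom_apply] using congr($hfφ s))
    (IsLocalization.algHom_ext P.primeCompl <| AlgHom.ext fun r =>
      show Localization.localAlgHom Q P φ hQ
          (IsLocalization.liftAlgHom hunit (algebraMap R _ r)) = algebraMap R _ r by
        simpa [IsLocalization.liftAlgHom_apply] using congr($hφf r))

end LocalAlgEquiv

theorem MvPolynomial.quotient_algHom_ext {σ R A : Type*} [CommRing R] [Semiring A] [Algebra R A]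
    {I : Ideal (MvPolynomial σ R)} {f g : MvPolynomial σ R ⧸ I →ₐ[R] A}
    (h : ∀ i, f (Ideal.Quotient.mk I (X i)) = g (Ideal.Quotient.mk I (X i))) : f = g :=
  Ideal.Quotient.algHom_ext _ (MvPolynomial.algHom_ext h)

section LiftQuotientSpan

variable {σ R A : Type*} [CommRing R] [CommRing A] [Algebra R A]

noncomputable def MvPolynomial.liftQuotientSpan (s : Set (MvPolynomial σ R)) (x : σ → A)
    (hx : ∀ g ∈ s, aeval x g = 0) : MvPolynomial σ R ⧸ Ideal.span s →ₐ[R] A :=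
  Ideal.Quotient.liftₐ _ (aeval x) fun _ hg =>
    (Ideal.span_le (I := RingHom.ker (aeval x))).2 hx hg

@[simp]
theorem MvPolynomial.liftQuotientSpan_mk (s : Set (MvPolynomial σ R)) (x : σ → A)
    (hx : ∀ g ∈ s, aeval x g = 0) (g : MvPolynomial σ R) :
    liftQuotientSpan s x hx (Ideal.Quotient.mk _ g) = aeval x g :=
  rfl

end LiftQuotientSpan

noncomputable section ThreeMinors

variable (K : Type*) [CommRing K] (m n : ℕ)

-- In `R` the variables `0, …, 4` are `A, B, C, D, T`; in `S` the variables `0, …, 3` are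
-- `T, A, B, C`.
abbrev twoByTwoMinors : Set (MvPolynomial (Fin 5) K) :=
  { (X 0 ^ 2) * (X 0 ^ 2 + X 4 ^ m) - X 1 * X 2,
    (X 0 ^ 2 + X 4 ^ m) * (X 1 ^ n - X 3) - X 2 * X 3,
    X 1 * (X 1 ^ n - X 3) - (X 0 ^ 2) * X 3 }

abbrev minorsIdeal : Ideal (MvPolynomial (Fin 5) K) := Ideal.span (twoByTwoMinors K m n)

abbrev hypersurfaceIdeal : Ideal (MvPolynomial (Fin 4) K) :=
  Ideal.span {(X 1 ^ 2) * (X 1 ^ 2 + X 0 ^ m) - X 2 * X 3}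

local notation "𝓡" => MvPolynomial (Fin 5) K ⧸ minorsIdeal K m n
local notation "𝓢" => MvPolynomial (Fin 4) K ⧸ hypersurfaceIdeal K m
local notation "mkR" => Ideal.Quotient.mk (minorsIdeal K m n)
local notation "mkS" => Ideal.Quotient.mk (hypersurfaceIdeal K m)

def minorsPrime : Ideal 𝓡 := Ideal.span {mkR (X 0), mkR (X 1), mkR (X 2), mkR (X 3)}

def hypersurfacePrime : Ideal 𝓢 := Ideal.span {mkS (X 1), mkS (X 2), mkS (X 3)}

theorem aeval_twoByTwoMinors_eq_zero {L : Type*} [CommRing L] [Algebra K L] {a b c d t : L}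
    (hrel : a ^ 2 * (a ^ 2 + t ^ m) = b * c) (hu : IsUnit (c + a ^ 2 + t ^ m))
    (hd : d * (c + a ^ 2 + t ^ m) = b ^ n * (a ^ 2 + t ^ m)) :
    ∀ g ∈ twoByTwoMinors K m n, aeval ![a, b, c, d, t] g = 0 := by
  have hthird : b * (b ^ n - d) = a ^ 2 * d :=
    hu.mul_left_inj.1 <| by linear_combination (-b - a ^ 2) * hd - b ^ n * hrel
  simp only [Set.mem_insert_iff, Set.mem_singleton_iff, forall_eq_or_imp, forall_eq, map_sub,
    map_mul, map_add, map_pow, aeval_X, Fin.isValue, Matrix.cons_val_zero, Matrix.cons_val_one,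
    Matrix.cons_val]
  exact ⟨by linear_combination hrel, by linear_combination -hd, by linear_combination hthird⟩

theorem minors_relation₁ :
    mkR (X 0) ^ 2 * (mkR (X 0) ^ 2 + mkR (X 4) ^ m) = mkR (X 1) * mkR (X 2) := by
  have := Ideal.Quotient.eq_zero_iff_mem.2
    (Ideal.subset_span (Set.mem_insert _ _) : _ ∈ minorsIdeal K m n)
  simp only [map_sub, map_mul, map_add, map_pow] at this
  linear_combination this

theorem minors_relation₂ :
    mkR (X 3) * (mkR (X 2) + mkR (X 0) ^ 2 + mkR (X 4) ^ m) =
      mkR (X 1) ^ n * (mkR (X 0) ^ 2 + mkR (X 4) ^ m) := by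
  have := Ideal.Quotient.eq_zero_iff_mem.2
    (Ideal.subset_span (by simp) :
      (X 0 ^ 2 + X 4 ^ m) * (X 1 ^ n - X 3) - X 2 * X 3 ∈ minorsIdeal K m n)
  simp only [map_sub, map_mul, map_add, map_pow] at this
  linear_combination -this

theorem hypersurface_relation :
    mkS (X 1) ^ 2 * (mkS (X 1) ^ 2 + mkS (X 0) ^ m) = mkS (X 2) * mkS (X 3) := by
  have := Ideal.Quotient.eq_zero_iff_mem.2
    (Ideal.mem_span_singleton_self _ : _ ∈ hypersurfaceIdeal K m)
  simp only [map_sub, map_mul, map_add, map_pow] at this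
  linear_combination this

def hypersurfaceToMinors : 𝓢 →ₐ[K] 𝓡 :=
  liftQuotientSpan _ ![mkR (X 4), mkR (X 0), mkR (X 1), mkR (X 2)] <| by
    simpa [sub_eq_zero] using minors_relation₁ K m n

@[simp]
theorem hypersurfaceToMinors_mk_X (i : Fin 4) :
    hypersurfaceToMinors K m n (mkS (X i)) = ![mkR (X 4), mkR (X 0), mkR (X 1), mkR (X 2)] i := by
  simp [hypersurfaceToMinors]

def minorsToHypersurface (hn : n ≠ 0) : 𝓡 →ₐ[K] 𝓢 :=
  liftQuotientSpan _ ![0, 0, 0, 0, mkS (X 0)] <| by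
    simp [zero_pow hn]

def hypersurfaceEval : 𝓢 →ₐ[K] K :=
  liftQuotientSpan _ ![1, 0, 0, 0] <| by rintro _ rfl; simp

theorem comap_minorsPrime (hn : n ≠ 0) :
    (minorsPrime K m n).comap (hypersurfaceToMinors K m n) = hypersurfacePrime K m := by
  apply le_antisymm
  · intro s hs
    have hker : minorsPrime K m n ≤ RingHom.ker (minorsToHypersurface K m n hn) := by
      simp [minorsPrime, Ideal.span_le, Set.insert_subset_iff, minorsToHypersurface]
    have hretract : (Ideal.Quotient.mkₐ K (hypersurfacePrime K m)).comp
        ((minorsToHypersurface K m n hn).comp (hypersurfaceToMinors K m n)) =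
        Ideal.Quotient.mkₐ K _ := by
      apply quotient_algHom_ext
      intro i
      rw [AlgHom.comp_apply, AlgHom.comp_apply, Ideal.Quotient.mkₐ_eq_mk, eq_comm,
        Ideal.Quotient.eq]
      fin_cases i
      · simp [minorsToHypersurface]
      all_goals
        simp only [minorsToHypersurface, hypersurfaceToMinors_mk_X, liftQuotientSpan_mk, aeval_X,
          Fin.isValue, Fin.mk_one, Fin.reduceFinMk, Matrix.cons_val, Matrix.cons_val_zero,
          Matrix.cons_val_one, sub_zero]
        exact Ideal.subset_span (by simp)
    rw [← Ideal.Quotient.eq_zero_iff_mem, ← Ideal.Quotient.mkₐ_eq_mk K, ← hretract,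
      AlgHom.comp_apply, AlgHom.comp_apply, RingHom.mem_ker.1 (hker hs), map_zero]
  · simp only [hypersurfacePrime, Ideal.span_le, Set.insert_subset_iff, Set.singleton_subset_iff,
      SetLike.mem_coe, Ideal.mem_comap, hypersurfaceToMinors_mk_X]
    refine ⟨?_, ?_, ?_⟩ <;> exact Ideal.subset_span (by simp)

theorem hypersurfaceUnit_notMem [Nontrivial K] :
    mkS (X 3) + mkS (X 1) ^ 2 + mkS (X 0) ^ m ∉ hypersurfacePrime K m := by
  intro h
  have hker : hypersurfacePrime K m ≤ RingHom.ker (hypersurfaceEval K m) := by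
    simp [hypersurfacePrime, Ideal.span_le, Set.insert_subset_iff, hypersurfaceEval]
  simpa [hypersurfaceEval] using hker h

theorem minorsUnit_notMem [Nontrivial K] (hn : n ≠ 0) :
    mkR (X 2) + mkR (X 0) ^ 2 + mkR (X 4) ^ m ∉ minorsPrime K m n := by
  have := hypersurfaceUnit_notMem K m
  rw [← comap_minorsPrime K m n hn, Ideal.mem_comap] at this
  simpa using this

section Localized

variable [Nontrivial K]

local notation "𝓡ₚ" => Localization.AtPrime (minorsPrime K m n)
local notation "𝓢ₚ" => Localization.AtPrime (hypersurfacePrime K m)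

def localizedD [(hypersurfacePrime K m).IsPrime] : 𝓢ₚ :=
  IsLocalization.mk' _ (mkS (X 2) ^ n * (mkS (X 1) ^ 2 + mkS (X 0) ^ m))
    (⟨_, hypersurfaceUnit_notMem K m⟩ : (hypersurfacePrime K m).primeCompl)

theorem localizedD_mul [(hypersurfacePrime K m).IsPrime] :
    localizedD K m n * algebraMap 𝓢 𝓢ₚ (mkS (X 3) + mkS (X 1) ^ 2 + mkS (X 0) ^ m) =
      algebraMap 𝓢 𝓢ₚ (mkS (X 2) ^ n * (mkS (X 1) ^ 2 + mkS (X 0) ^ m)) :=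
  IsLocalization.mk'_spec _ _ _

def minorsToLocalization [(hypersurfacePrime K m).IsPrime] : 𝓡 →ₐ[K] 𝓢ₚ :=
  liftQuotientSpan _
    ![algebraMap 𝓢 𝓢ₚ (mkS (X 1)), algebraMap 𝓢 𝓢ₚ (mkS (X 2)), algebraMap 𝓢 𝓢ₚ (mkS (X 3)),
      localizedD K m n, algebraMap 𝓢 𝓢ₚ (mkS (X 0))] <| by
    have hu := (IsLocalization.AtPrime.isUnit_to_map_iff 𝓢ₚ (hypersurfacePrime K m) _).2
      (hypersurfaceUnit_notMem K m)
    have hrel := congr(algebraMap 𝓢 𝓢ₚ $(hypersurface_relation K m))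
    have hd := localizedD_mul K m n
    simp only [map_add, map_mul, map_pow] at hu hrel hd
    exact aeval_twoByTwoMinors_eq_zero K m n hrel hu hd

theorem minorsToLocalization_comp_hypersurfaceToMinors [(hypersurfacePrime K m).IsPrime] :
    (minorsToLocalization K m n).comp (hypersurfaceToMinors K m n) =
      IsScalarTower.toAlgHom K 𝓢 𝓢ₚ := by
  apply quotient_algHom_ext
  intro i
  fin_cases i <;> simp [minorsToLocalization]

theorem localRingHom_localizedD (hn : n ≠ 0) [(minorsPrime K m n).IsPrime]
    [(hypersurfacePrime K m).IsPrime] :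
    Localization.localRingHom _ _ (hypersurfaceToMinors K m n : 𝓢 →+* 𝓡)
      (by rw [Ideal.comap_coe, comap_minorsPrime K m n hn]) (localizedD K m n) =
      algebraMap 𝓡 𝓡ₚ (mkR (X 3)) := by
  rw [localizedD, Localization.localRingHom_mk', IsLocalization.mk'_eq_iff_eq_mul, ← map_mul]
  congr 1
  simpa using (minors_relation₂ K m n).symm

theorem localAlgHom_comp_minorsToLocalization (hn : n ≠ 0) [(minorsPrime K m n).IsPrime]
    [(hypersurfacePrime K m).IsPrime] :
    (Localization.localAlgHom _ _ (hypersurfaceToMinors K m n)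
      (comap_minorsPrime K m n hn).symm).comp (minorsToLocalization K m n) =
      IsScalarTower.toAlgHom K 𝓡 𝓡ₚ := by
  apply quotient_algHom_ext
  intro i
  fin_cases i <;> simp [minorsToLocalization, localRingHom_localizedD K m n hn]

def localizationAlgEquiv (hn : n ≠ 0) [(minorsPrime K m n).IsPrime]
    [(hypersurfacePrime K m).IsPrime] : 𝓡ₚ ≃ₐ[K] 𝓢ₚ :=
  Localization.localAlgEquivOfComp (hypersurfaceToMinors K m n) (comap_minorsPrime K m n hn).symm
    (minorsToLocalization K m n) (minorsToLocalization_comp_hypersurfaceToMinors K m n)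
    (localAlgHom_comp_minorsToLocalization K m n hn)

end Localized

end ThreeMinors

theorem stmt13_general (K : Type) [Field K]
    (m n : ℕ) (hn : 0 < n)
    (I : Ideal (MvPolynomial (Fin 5) K))
    (hI : I = Ideal.span
      { (X 0 ^ 2) * (X 0 ^ 2 + X 4 ^ m) - X 1 * X 2,
        (X 0 ^ 2 + X 4 ^ m) * (X 1 ^ n - X 3) - X 2 * X 3,
        X 1 * (X 1 ^ n - X 3) - (X 0 ^ 2) * X 3 })
    (a b c d t : MvPolynomial (Fin 5) K ⧸ I)
    (ha : a = Ideal.Quotient.mk I (X 0)) (hb : b = Ideal.Quotient.mk I (X 1))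
    (hc : c = Ideal.Quotient.mk I (X 2)) (hd : d = Ideal.Quotient.mk I (X 3))
    (ht : t = Ideal.Quotient.mk I (X 4))
    (P : Ideal (MvPolynomial (Fin 5) K ⧸ I)) (hP : P = Ideal.span {a, b, c, d})
    [P.IsPrime]
    (Jh : Ideal (MvPolynomial (Fin 4) K))
    (hJh : Jh = Ideal.span
      {((X 1 ^ 2) * (X 1 ^ 2 + X 0 ^ m) - X 2 * X 3 : MvPolynomial (Fin 4) K)})
    (P' : Ideal (MvPolynomial (Fin 4) K ⧸ Jh))
    (hP' : P' = Ideal.span {Ideal.Quotient.mk Jh (X 1), Ideal.Quotient.mk Jh (X 2),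
      Ideal.Quotient.mk Jh (X 3)})
    [P'.IsPrime] :
    Nonempty ((Localization.AtPrime P) ≃ₐ[K] (Localization.AtPrime P')) ∧
    IsUnit (algebraMap _ (Localization.AtPrime P) (c + a ^ 2 + t ^ m)) ∧
    algebraMap _ (Localization.AtPrime P) (d * (c + a ^ 2 + t ^ m)) =
      algebraMap _ (Localization.AtPrime P) (b ^ n * (a ^ 2 + t ^ m)) := by
  subst ha hb hc hd ht hI hJh
  obtain rfl : P = minorsPrime K m n := hP
  obtain rfl : P' = hypersurfacePrime K m := hP'
  refine ⟨⟨localizationAlgEquiv K m n hn.ne'⟩, ?_, congrArg _ (minors_relation₂ K m n)⟩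
  exact (IsLocalization.AtPrime.isUnit_to_map_iff _ _ _).2 (minorsUnit_notMem K m n hn.ne')

/-- with P = (a,b,c,d) in R = K[A,B,C,D,T]/I (variables 0=A, 1=B, 2=C,
3=D, 4=T), R_P is isomorphic to the localization of the hypersurface
K[T,A,B,C]/(A²(A²+Tᵐ) - BC) (variables 0=T, 1=A, 2=B, 3=C) at the prime (a,b,c);
in particular c + a² + tᵐ is invertible in R_P and d = bⁿ(a²+tᵐ)/(c+a²+tᵐ) there. -/
theorem stmt13 (K : Type) [Field K] (p : ℕ) [Fact p.Prime] [CharP K p] (hp : 2 < p)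
    (m n : ℕ) (hm : 0 < m) (hn : 0 < n)
    (I : Ideal (MvPolynomial (Fin 5) K))
    (hI : I = Ideal.span
      { (X 0 ^ 2) * (X 0 ^ 2 + X 4 ^ m) - X 1 * X 2,
        (X 0 ^ 2 + X 4 ^ m) * (X 1 ^ n - X 3) - X 2 * X 3,
        X 1 * (X 1 ^ n - X 3) - (X 0 ^ 2) * X 3 })
    (a b c d t : MvPolynomial (Fin 5) K ⧸ I)
    (ha : a = Ideal.Quotient.mk I (X 0)) (hb : b = Ideal.Quotient.mk I (X 1))
    (hc : c = Ideal.Quotient.mk I (X 2)) (hd : d = Ideal.Quotient.mk I (X 3))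
    (ht : t = Ideal.Quotient.mk I (X 4))
    (P : Ideal (MvPolynomial (Fin 5) K ⧸ I)) (hP : P = Ideal.span {a, b, c, d})
    [P.IsPrime]
    (Jh : Ideal (MvPolynomial (Fin 4) K))
    (hJh : Jh = Ideal.span
      {((X 1 ^ 2) * (X 1 ^ 2 + X 0 ^ m) - X 2 * X 3 : MvPolynomial (Fin 4) K)})
    (P' : Ideal (MvPolynomial (Fin 4) K ⧸ Jh))
    (hP' : P' = Ideal.span {Ideal.Quotient.mk Jh (X 1), Ideal.Quotient.mk Jh (X 2),
      Ideal.Quotient.mk Jh (X 3)})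
    [P'.IsPrime] :
    Nonempty ((Localization.AtPrime P) ≃ₐ[K] (Localization.AtPrime P')) ∧
    IsUnit (algebraMap _ (Localization.AtPrime P) (c + a ^ 2 + t ^ m)) ∧
    algebraMap _ (Localization.AtPrime P) (d * (c + a ^ 2 + t ^ m)) =
      algebraMap _ (Localization.AtPrime P) (b ^ n * (a ^ 2 + t ^ m)) :=
  stmt13_general K m n hn I hI a b c d t ha hb hc hd ht P hP Jh hJh P' hP'
end

section
/- Let K be a field of characteristic p > 2 and m, n positive integers, R = K[A,B,C,D,T]/I as above, and Q = (a, b, c + t^m, d) ⊆ R. Then R_Q is isomorphic to the localization of the hypersurface K[T,A,C,D]/(C^n D(C + A² + T^m) - A^{2n}(A² + T^m)^{n+1}) at the prime (a, c + t^m, d); in particular b = a²(a² + t^m)/c in R_Q. -/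
open MvPolynomial

set_option linter.unreachableTactic false
set_option linter.unusedTactic false
set_option maxHeartbeats 4000000
set_option synthInstance.maxHeartbeats 1000000

noncomputable section Stmt14Aux

variable (K : Type) [Field K] (m : ℕ)

/-- Evaluation sending A,B,D ↦ 0, C ↦ -T^m, T ↦ T. -/
def e5 : MvPolynomial (Fin 5) K →ₐ[K] Polynomial K :=
  aeval ![0, 0, -(Polynomial.X ^ m), 0, Polynomial.X]

/-- Evaluation sending T ↦ T, A ↦ 0, C ↦ -T^m, D ↦ 0. -/
def e4 : MvPolynomial (Fin 4) K →ₐ[K] Polynomial K :=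
  aeval ![Polynomial.X, 0, -(Polynomial.X ^ m), 0]

/-- translation of variables (0=T,1=A,2=C,3=D) into (0=A,1=B,2=C,3=D,4=T). -/
def tr : MvPolynomial (Fin 4) K →ₐ[K] MvPolynomial (Fin 5) K :=
  aeval ![X 4, X 0, X 2, X 3]

def P5 : Ideal (MvPolynomial (Fin 5) K) := Ideal.span {X 0, X 1, X 2 + X 4 ^ m, X 3}
def P4 : Ideal (MvPolynomial (Fin 4) K) := Ideal.span {X 1, X 2 + X 0 ^ m, X 3}

lemma e5_tr (f : MvPolynomial (Fin 4) K) : e5 K m (tr K f) = e4 K m f := by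
  have h : (e5 K m).comp (tr K) = e4 K m := by
    apply algHom_ext; intro i; fin_cases i <;> simp [e5, e4, tr]
  exact DFunLike.congr_fun h f

lemma tr_C (k : K) : tr K (MvPolynomial.C k) = MvPolynomial.C k := by
  simp [tr, MvPolynomial.algebraMap_eq]

lemma mem_P5_iff (f : MvPolynomial (Fin 5) K) : f ∈ P5 K m ↔ e5 K m f = 0 := by
  constructor
  · intro hf
    have hle : P5 K m ≤ RingHom.ker (e5 K m).toRingHom := by
      rw [P5, Ideal.span_le]
      rintro x hx
      simp only [Set.mem_insert_iff, Set.mem_singleton_iff] at hx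
      rcases hx with rfl | rfl | rfl | rfl <;>
        simp [RingHom.mem_ker, e5]
    exact hle hf
  · intro hf
    have key : (Ideal.Quotient.mkₐ K (P5 K m)).comp
        ((Polynomial.aeval (X 4 : MvPolynomial (Fin 5) K)).restrictScalars K |>.comp (e5 K m)) =
        Ideal.Quotient.mkₐ K (P5 K m) := by
      apply algHom_ext; intro i; fin_cases i <;>
        simp [e5, Ideal.Quotient.mkₐ_eq_mk] <;>
          first
          | rfl
          | (rw [Ideal.Quotient.eq_zero_iff_mem]; exact Ideal.subset_span (by simp))
          | (rw [eq_comm, Ideal.Quotient.eq_zero_iff_mem]; exact Ideal.subset_span (by simp))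
          | (rw [eq_neg_iff_add_eq_zero, ← map_pow, ← map_add, Ideal.Quotient.eq_zero_iff_mem]
             exact Ideal.subset_span (by simp))
          | (rw [neg_eq_iff_add_eq_zero, add_comm, ← map_pow, ← map_add,
               Ideal.Quotient.eq_zero_iff_mem]
             exact Ideal.subset_span (by simp))
    have h2 := DFunLike.congr_fun key f
    simp only [AlgHom.comp_apply, hf, map_zero, Ideal.Quotient.mkₐ_eq_mk] at h2
    rw [← Ideal.Quotient.eq_zero_iff_mem, ← h2]

lemma mem_P4_iff (f : MvPolynomial (Fin 4) K) : f ∈ P4 K m ↔ e4 K m f = 0 := by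
  constructor
  · intro hf
    have hle : P4 K m ≤ RingHom.ker (e4 K m).toRingHom := by
      rw [P4, Ideal.span_le]
      rintro x hx
      simp only [Set.mem_insert_iff, Set.mem_singleton_iff] at hx
      rcases hx with rfl | rfl | rfl <;>
        simp [RingHom.mem_ker, e4]
    exact hle hf
  · intro hf
    have key : (Ideal.Quotient.mkₐ K (P4 K m)).comp
        ((Polynomial.aeval (X 0 : MvPolynomial (Fin 4) K)).restrictScalars K |>.comp (e4 K m)) =
        Ideal.Quotient.mkₐ K (P4 K m) := by
      apply algHom_ext; intro i; fin_cases i <;>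
        simp [e4, Ideal.Quotient.mkₐ_eq_mk] <;>
          first
          | rfl
          | (rw [Ideal.Quotient.eq_zero_iff_mem]; exact Ideal.subset_span (by simp))
          | (rw [eq_comm, Ideal.Quotient.eq_zero_iff_mem]; exact Ideal.subset_span (by simp))
          | (rw [eq_neg_iff_add_eq_zero, ← map_pow, ← map_add, Ideal.Quotient.eq_zero_iff_mem]
             exact Ideal.subset_span (by simp))
          | (rw [neg_eq_iff_add_eq_zero, add_comm, ← map_pow, ← map_add,
               Ideal.Quotient.eq_zero_iff_mem]
             exact Ideal.subset_span (by simp))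
    have h2 := DFunLike.congr_fun key f
    simp only [AlgHom.comp_apply, hf, map_zero, Ideal.Quotient.mkₐ_eq_mk] at h2
    rw [← Ideal.Quotient.eq_zero_iff_mem, ← h2]

lemma hyperid {R : Type*} [CommRing R] (A B C D u S : R) (n : ℕ)
    (hS : (A ^ 2 * u) ^ n - (B * C) ^ n = (A ^ 2 * u - B * C) * S) :
    C ^ n * D * (C + u) - A ^ (2 * n) * u ^ (n + 1) =
      (-(C ^ n)) * (u * (B ^ n - D) - C * D) + (-(u * S)) * (A ^ 2 * u - B * C) := by
  linear_combination (-u) * hS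

lemma polyid2 {R : Type*} [CommRing R] (A C D u : R) (n : ℕ) :
    u * (A ^ 2 * u) ^ n - u * C ^ n * D - C ^ (n + 1) * D =
      -(C ^ n * D * (C + u) - A ^ (2 * n) * u ^ (n + 1)) := by ring

lemma polyid3 {R : Type*} [CommRing R] (A C D u : R) (n : ℕ) :
    (A ^ 2 * u) ^ (n + 1) - (A ^ 2 * u) * C ^ n * D - A ^ 2 * C ^ (n + 1) * D =
      A ^ 2 * -(C ^ n * D * (C + u) - A ^ (2 * n) * u ^ (n + 1)) := by ring

lemma unit_cancel {R : Type*} [CommRing R] (u : Rˣ) (x : R) (h : (u : R) * x = 0) : x = 0 := by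
  have h2 := congrArg (fun z => ((u⁻¹ : Rˣ) : R) * z) h
  simpa [← mul_assoc] using h2

lemma unit_cancel' {R : Type*} [CommRing R] (u : Rˣ) (x y : R)
    (h : x * (u : R) = y * (u : R)) : x = y := by
  have h2 := congrArg (fun z => z * ((u⁻¹ : Rˣ) : R)) h
  simpa [mul_assoc] using h2

lemma kill2aux {R : Type*} [CommRing R] (U D W : R) (cu : Rˣ) (n : ℕ)
    (h0 : U * W ^ n - U * (cu : R) ^ n * D - (cu : R) ^ (n + 1) * D = 0) :
    U * ((W * ↑cu⁻¹) ^ n - D) - ↑cu * D = 0 := by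
  refine unit_cancel (cu ^ n) _ ?_
  have hb : (cu : R) * (W * ↑cu⁻¹) = W := by
    rw [mul_comm W, ← mul_assoc, Units.mul_inv, one_mul]
  rw [Units.val_pow_eq_pow_val]
  calc (cu : R) ^ n * (U * ((W * ↑cu⁻¹) ^ n - D) - ↑cu * D)
      = U * ((cu : R) * (W * ↑cu⁻¹)) ^ n - U * (cu : R) ^ n * D - (cu : R) ^ (n + 1) * D := by
        ring
    _ = 0 := by rw [hb]; exact h0

lemma kill3aux {R : Type*} [CommRing R] (A D W : R) (cu : Rˣ) (n : ℕ)
    (h0 : W ^ (n + 1) - W * (cu : R) ^ n * D - A ^ 2 * (cu : R) ^ (n + 1) * D = 0) :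
    W * ↑cu⁻¹ * ((W * ↑cu⁻¹) ^ n - D) - A ^ 2 * D = 0 := by
  refine unit_cancel (cu ^ (n + 1)) _ ?_
  have hb : (cu : R) * (W * ↑cu⁻¹) = W := by
    rw [mul_comm W, ← mul_assoc, Units.mul_inv, one_mul]
  rw [Units.val_pow_eq_pow_val]
  calc (cu : R) ^ (n + 1) * (W * ↑cu⁻¹ * ((W * ↑cu⁻¹) ^ n - D) - A ^ 2 * D)
      = ((cu : R) * (W * ↑cu⁻¹)) ^ (n + 1)
          - ((cu : R) * (W * ↑cu⁻¹)) * (cu : R) ^ n * D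
          - A ^ 2 * (cu : R) ^ (n + 1) * D := by ring
    _ = 0 := by rw [hb]; exact h0

end Stmt14Aux

theorem stmt14 (K : Type) [Field K] (p : ℕ) [Fact p.Prime] [CharP K p] (hp : 2 < p)
    (m n : ℕ) (hm : 0 < m) (hn : 0 < n)
    (I : Ideal (MvPolynomial (Fin 5) K))
    (hI : I = Ideal.span
      { (X 0 ^ 2) * (X 0 ^ 2 + X 4 ^ m) - X 1 * X 2,
        (X 0 ^ 2 + X 4 ^ m) * (X 1 ^ n - X 3) - X 2 * X 3,
        X 1 * (X 1 ^ n - X 3) - (X 0 ^ 2) * X 3 })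
    (a b c d t : MvPolynomial (Fin 5) K ⧸ I)
    (ha : a = Ideal.Quotient.mk I (X 0)) (hb : b = Ideal.Quotient.mk I (X 1))
    (hc : c = Ideal.Quotient.mk I (X 2)) (hd : d = Ideal.Quotient.mk I (X 3))
    (ht : t = Ideal.Quotient.mk I (X 4))
    (Q : Ideal (MvPolynomial (Fin 5) K ⧸ I)) (hQ : Q = Ideal.span {a, b, c + t ^ m, d})
    [Q.IsPrime]
    (Jh : Ideal (MvPolynomial (Fin 4) K))
    (hJh : Jh = Ideal.span
      {(X 2 ^ n * X 3 * (X 2 + X 1 ^ 2 + X 0 ^ m)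
          - X 1 ^ (2 * n) * (X 1 ^ 2 + X 0 ^ m) ^ (n + 1) : MvPolynomial (Fin 4) K)})
    (Q' : Ideal (MvPolynomial (Fin 4) K ⧸ Jh))
    (hQ' : Q' = Ideal.span {Ideal.Quotient.mk Jh (X 1),
      Ideal.Quotient.mk Jh (X 2 + X 0 ^ m), Ideal.Quotient.mk Jh (X 3)})
    [Q'.IsPrime] :
    Nonempty ((Localization.AtPrime Q) ≃ₐ[K] (Localization.AtPrime Q')) ∧
    IsUnit (algebraMap _ (Localization.AtPrime Q) c) ∧
    algebraMap _ (Localization.AtPrime Q) (b * c) =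
      algebraMap _ (Localization.AtPrime Q) (a ^ 2 * (a ^ 2 + t ^ m)) := by
  subst ha hb hc hd ht
  -- membership characterizations
  have hIP : I ≤ P5 K m := by
    rw [hI, Ideal.span_le]
    rintro x hx
    simp only [Set.mem_insert_iff, Set.mem_singleton_iff] at hx
    have h0 : (X 0 : MvPolynomial (Fin 5) K) ∈ P5 K m := Ideal.subset_span (by simp)
    have h1 : (X 1 : MvPolynomial (Fin 5) K) ∈ P5 K m := Ideal.subset_span (by simp)
    have h3 : (X 3 : MvPolynomial (Fin 5) K) ∈ P5 K m := Ideal.subset_span (by simp)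
    rcases hx with rfl | rfl | rfl
    · exact sub_mem (Ideal.mul_mem_right _ _ (Ideal.pow_mem_of_mem _ h0 2 (by norm_num)))
        (Ideal.mul_mem_right _ _ h1)
    · exact sub_mem (Ideal.mul_mem_left _ _ (sub_mem (Ideal.pow_mem_of_mem _ h1 n hn) h3))
        (Ideal.mul_mem_left _ _ h3)
    · exact sub_mem (Ideal.mul_mem_right _ _ h1) (Ideal.mul_mem_left _ _ h3)
  have hJP : Jh ≤ P4 K m := by
    rw [hJh, Ideal.span_le]
    rintro x hx
    simp only [Set.mem_singleton_iff] at hx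
    subst hx
    have h1 : (X 1 : MvPolynomial (Fin 4) K) ∈ P4 K m := Ideal.subset_span (by simp)
    have h3 : (X 3 : MvPolynomial (Fin 4) K) ∈ P4 K m := Ideal.subset_span (by simp)
    exact sub_mem (Ideal.mul_mem_right _ _ (Ideal.mul_mem_left _ _ h3))
      (Ideal.mul_mem_right _ _ (Ideal.pow_mem_of_mem _ h1 _ (by positivity)))
  have hQmap : Q = Ideal.map (Ideal.Quotient.mk I) (P5 K m) := by
    rw [hQ, P5, Ideal.map_span]
    rw [Set.image_insert_eq, Set.image_insert_eq, Set.image_insert_eq, Set.image_singleton,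
      map_add, map_pow]
  have hQ'map : Q' = Ideal.map (Ideal.Quotient.mk Jh) (P4 K m) := by
    rw [hQ', P4, Ideal.map_span]
    rw [Set.image_insert_eq, Set.image_insert_eq, Set.image_singleton]
  have hmemQ : ∀ x : MvPolynomial (Fin 5) K,
      Ideal.Quotient.mk I x ∈ Q ↔ e5 K m x = 0 := by
    intro x
    rw [hQmap, Ideal.mem_quotient_iff_mem hIP, mem_P5_iff]
  have hmemQ' : ∀ x : MvPolynomial (Fin 4) K,
      Ideal.Quotient.mk Jh x ∈ Q' ↔ e4 K m x = 0 := by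
    intro x
    rw [hQ'map, Ideal.mem_quotient_iff_mem hJP, mem_P4_iff]
  -- c is invertible in R_Q
  have hXm : (Polynomial.X : Polynomial K) ^ m ≠ 0 := pow_ne_zero _ Polynomial.X_ne_zero
  have hcQ : Ideal.Quotient.mk I (X 2) ∉ Q := by
    rw [hmemQ]
    simp [e5, hXm]
  have hcUnit : IsUnit (algebraMap _ (Localization.AtPrime Q) (Ideal.Quotient.mk I (X 2))) :=
    (IsLocalization.AtPrime.isUnit_to_map_iff (Localization.AtPrime Q) Q _).mpr hcQ
  -- the relation b*c = a^2*(a^2+t^m) already in R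
  have hbc : (Ideal.Quotient.mk I (X 1)) * (Ideal.Quotient.mk I (X 2)) =
      (Ideal.Quotient.mk I (X 0)) ^ 2 *
        ((Ideal.Quotient.mk I (X 0)) ^ 2 + (Ideal.Quotient.mk I (X 4)) ^ m) := by
    simp only [← map_pow, ← map_add, ← map_mul]
    rw [eq_comm, Ideal.Quotient.eq]
    exact hI ▸ Ideal.subset_span (by simp)
  refine ⟨?_, hcUnit, by rw [hbc]⟩
  -- the hypersurface equation holds in R
  have htrJ : tr K (X 2 ^ n * X 3 * (X 2 + X 1 ^ 2 + X 0 ^ m)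
      - X 1 ^ (2 * n) * (X 1 ^ 2 + X 0 ^ m) ^ (n + 1)) ∈ I := by
    obtain ⟨S, hS⟩ := sub_dvd_pow_sub_pow
      ((X 0 : MvPolynomial (Fin 5) K) ^ 2 * (X 0 ^ 2 + X 4 ^ m)) (X 1 * X 2) n
    have h1 : tr K (X 2 ^ n * X 3 * (X 2 + X 1 ^ 2 + X 0 ^ m)
        - X 1 ^ (2 * n) * (X 1 ^ 2 + X 0 ^ m) ^ (n + 1)) =
        (X 2 : MvPolynomial (Fin 5) K) ^ n * X 3 * (X 2 + (X 0 ^ 2 + X 4 ^ m))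
          - X 0 ^ (2 * n) * (X 0 ^ 2 + X 4 ^ m) ^ (n + 1) := by
      simp only [tr, map_sub, map_mul, map_add, map_pow, aeval_X]
      simp only [Matrix.cons_val_zero, Matrix.cons_val_one, Matrix.head_cons,
        Matrix.cons_val_two, Matrix.tail_cons, Matrix.cons_val_three]
      ring
    have h2 := hyperid (X 0 : MvPolynomial (Fin 5) K) (X 1) (X 2) (X 3)
      (X 0 ^ 2 + X 4 ^ m) S n hS
    rw [h1, h2, hI]
    exact add_mem (Ideal.mul_mem_left _ _ (Ideal.subset_span (by simp)))
      (Ideal.mul_mem_left _ _ (Ideal.subset_span (by simp)))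
  -- the algebra map from the hypersurface ring to R
  have hkerJ : ∀ x ∈ Jh, ((Ideal.Quotient.mkₐ K I).comp (tr K)) x = 0 := by
    intro x hx
    rw [hJh, Ideal.mem_span_singleton] at hx
    obtain ⟨y, rfl⟩ := hx
    simp only [AlgHom.comp_apply, map_mul, Ideal.Quotient.mkₐ_eq_mk]
    rw [Ideal.Quotient.eq_zero_iff_mem.2 htrJ, zero_mul]
  obtain ⟨φq, hφq⟩ : ∃ f : (MvPolynomial (Fin 4) K ⧸ Jh) →ₐ[K] (MvPolynomial (Fin 5) K ⧸ I),
      ∀ x, f (Ideal.Quotient.mk Jh x) = Ideal.Quotient.mk I (tr K x) :=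
    ⟨Ideal.Quotient.liftₐ Jh ((Ideal.Quotient.mkₐ K I).comp (tr K)) hkerJ, fun x => by
      rfl⟩
  -- ψ : hypersurface ring → R_Q inverts everything outside Q'
  have hψu : ∀ y : Q'.primeCompl,
      IsUnit (((algebraMap (MvPolynomial (Fin 5) K ⧸ I) (Localization.AtPrime Q)).comp
        (φq.toRingHom)) y) := by
    rintro ⟨y, hy⟩
    obtain ⟨f, rfl⟩ := Ideal.Quotient.mk_surjective y
    have hfQ' : e4 K m f ≠ 0 := fun h => hy ((hmemQ' f).mpr h)
    simp only [RingHom.comp_apply, AlgHom.toRingHom_eq_coe, RingHom.coe_coe, hφq]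
    refine (IsLocalization.AtPrime.isUnit_to_map_iff (Localization.AtPrime Q) Q _).mpr ?_
    intro hmem
    exact hfQ' (by rw [← e5_tr]; exact (hmemQ _).mp hmem)
  set Φ : Localization.AtPrime Q' →+* Localization.AtPrime Q :=
    IsLocalization.lift (M := Q'.primeCompl) (S := Localization.AtPrime Q') hψu with hΦ
  have hΦa : ∀ x, Φ (algebraMap _ (Localization.AtPrime Q') x) =
      algebraMap _ (Localization.AtPrime Q) (φq x) := fun x => IsLocalization.lift_eq hψu x
  -- now the reverse map χ : R → (hypersurface)_Q'
  have hc'Q : Ideal.Quotient.mk Jh (X 2) ∉ Q' := by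
    rw [hmemQ']; simp [e4, hXm]
  have hc'U : IsUnit (algebraMap _ (Localization.AtPrime Q') (Ideal.Quotient.mk Jh (X 2))) :=
    (IsLocalization.AtPrime.isUnit_to_map_iff (Localization.AtPrime Q') Q' _).mpr hc'Q
  set G : MvPolynomial (Fin 4) K →+* Localization.AtPrime Q' :=
    (algebraMap (MvPolynomial (Fin 4) K ⧸ Jh) (Localization.AtPrime Q')).comp
      (Ideal.Quotient.mk Jh) with hG
  set cu : (Localization.AtPrime Q')ˣ := hc'U.unit with hcu
  have hcuv : (cu : Localization.AtPrime Q') = G (X 2) := hc'U.unit_spec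
  have hGJ : G (X 2 ^ n * X 3 * (X 2 + X 1 ^ 2 + X 0 ^ m)
      - X 1 ^ (2 * n) * (X 1 ^ 2 + X 0 ^ m) ^ (n + 1)) = 0 := by
    rw [hG, RingHom.comp_apply,
      Ideal.Quotient.eq_zero_iff_mem.2 (hJh ▸ Ideal.subset_span (Set.mem_singleton _)), map_zero]
  set U' : Localization.AtPrime Q' := G (X 1 ^ 2 + X 0 ^ m) with hU'
  set W : Localization.AtPrime Q' := G (X 1 ^ 2 * (X 1 ^ 2 + X 0 ^ m)) with hW
  have hWm : W = G (X 1) ^ 2 * U' := by rw [hW, hU', map_mul, map_pow]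
  have hU'm : U' = G (X 1) ^ 2 + G (X 0) ^ m := by rw [hU', map_add, map_pow, map_pow]
  have hzz : G (X 2) ^ n * G (X 3) * (G (X 2) + U') - G (X 1) ^ (2 * n) * U' ^ (n + 1) = 0 := by
    have h := hGJ
    simp only [map_sub, map_mul, map_pow, map_add] at h
    rw [hU'm, ← h]
    ring
  have h0 := polyid2 (G (X 1)) (G (X 2)) (G (X 3)) U' n
  rw [← hWm, hzz, neg_zero (G := Localization.AtPrime Q')] at h0
  have h0' := polyid3 (G (X 1)) (G (X 2)) (G (X 3)) U' n
  rw [← hWm, hzz, neg_zero (G := Localization.AtPrime Q'),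
    mul_zero (M₀ := Localization.AtPrime Q')] at h0'
  rw [← hcuv] at h0 h0'
  set χ : MvPolynomial (Fin 5) K →ₐ[K] Localization.AtPrime Q' :=
    aeval ![G (X 1), W * ↑cu⁻¹, G (X 2), G (X 3), G (X 0)] with hχ
  have hχ0 : χ (X 0) = G (X 1) := by rw [hχ, aeval_X]; rfl
  have hχ1 : χ (X 1) = W * ↑cu⁻¹ := by rw [hχ, aeval_X]; rfl
  have hχ2 : χ (X 2) = G (X 2) := by rw [hχ, aeval_X]; rfl
  have hχ3 : χ (X 3) = G (X 3) := by rw [hχ, aeval_X]; rfl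
  have hχ4 : χ (X 4) = G (X 0) := by rw [hχ, aeval_X]; rfl
  clear_value G cu U' W χ
  have hkill1 : χ ((X 0 ^ 2) * (X 0 ^ 2 + X 4 ^ m) - X 1 * X 2) = 0 := by
    simp only [map_sub, map_mul, map_add, map_pow, hχ0, hχ1, hχ2, hχ4]
    rw [← hU'm, ← hcuv, mul_assoc, Units.inv_mul, mul_one, ← hWm, sub_self]
  have hkill2 : χ ((X 0 ^ 2 + X 4 ^ m) * (X 1 ^ n - X 3) - X 2 * X 3) = 0 := by
    simp only [map_sub, map_mul, map_add, map_pow, hχ0, hχ1, hχ2, hχ3, hχ4]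
    rw [← hU'm, ← hcuv]
    exact kill2aux U' (G (X 3)) W cu n h0
  have hkill3 : χ (X 1 * (X 1 ^ n - X 3) - (X 0 ^ 2) * X 3) = 0 := by
    simp only [map_sub, map_mul, map_pow, hχ0, hχ1, hχ3]
    exact kill3aux (G (X 1)) (G (X 3)) W cu n h0'
  -- χ kills I, so descends to χq : R → (hypersurface)_Q'
  have hkerI : ∀ x ∈ I, χ x = 0 := by
    intro x hx
    rw [hI] at hx
    have hle : Ideal.span {(X 0 ^ 2) * (X 0 ^ 2 + X 4 ^ m) - X 1 * X 2,
        (X 0 ^ 2 + X 4 ^ m) * (X 1 ^ n - X 3) - X 2 * X 3,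
        X 1 * (X 1 ^ n - X 3) - (X 0 ^ 2) * X 3} ≤ RingHom.ker χ.toRingHom := by
      rw [Ideal.span_le]
      rintro y hy
      simp only [Set.mem_insert_iff, Set.mem_singleton_iff] at hy
      rcases hy with rfl | rfl | rfl
      · exact hkill1
      · exact hkill2
      · exact hkill3
    exact hle hx
  obtain ⟨χq, hχq⟩ : ∃ f : (MvPolynomial (Fin 5) K ⧸ I) →ₐ[K] Localization.AtPrime Q',
      ∀ x, f (Ideal.Quotient.mk I x) = χ x :=
    ⟨Ideal.Quotient.liftₐ I χ hkerI, fun x => by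
      rfl⟩
  -- the evaluation e4 descends to the hypersurface ring
  have h2n : 2 * n ≠ 0 := by positivity
  have hkerJ4 : ∀ x ∈ Jh, e4 K m x = 0 := by
    intro x hx
    rw [hJh, Ideal.mem_span_singleton] at hx
    obtain ⟨y, rfl⟩ := hx
    rw [map_mul]
    have : e4 K m (X 2 ^ n * X 3 * (X 2 + X 1 ^ 2 + X 0 ^ m)
        - X 1 ^ (2 * n) * (X 1 ^ 2 + X 0 ^ m) ^ (n + 1)) = 0 := by
      simp [e4, zero_pow h2n]
    rw [this, zero_mul]
  obtain ⟨e4q, he4q⟩ : ∃ f : (MvPolynomial (Fin 4) K ⧸ Jh) →ₐ[K] Polynomial K,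
      ∀ x, f (Ideal.Quotient.mk Jh x) = e4 K m x :=
    ⟨Ideal.Quotient.liftₐ Jh (e4 K m) hkerJ4, fun x => by
      rfl⟩
  -- residue map ε from the localization to the fraction field K(T)
  have hε0u : ∀ y : Q'.primeCompl,
      IsUnit (((algebraMap (Polynomial K) (FractionRing (Polynomial K))).comp
        e4q.toRingHom) y) := by
    rintro ⟨y, hy⟩
    obtain ⟨f, rfl⟩ := Ideal.Quotient.mk_surjective y
    have hf : e4 K m f ≠ 0 := fun h => hy ((hmemQ' f).mpr h)
    simp only [RingHom.comp_apply, AlgHom.toRingHom_eq_coe, RingHom.coe_coe, he4q]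
    rw [isUnit_iff_ne_zero]
    exact (map_ne_zero_iff _ (IsFractionRing.injective (Polynomial K)
      (FractionRing (Polynomial K)))).mpr hf
  set ε : Localization.AtPrime Q' →+* FractionRing (Polynomial K) :=
    IsLocalization.lift (M := Q'.primeCompl) (S := Localization.AtPrime Q') hε0u with hε
  have hεa : ∀ x, ε (algebraMap _ (Localization.AtPrime Q') x) =
      algebraMap (Polynomial K) (FractionRing (Polynomial K)) (e4q x) :=
    fun x => IsLocalization.lift_eq hε0u x
  -- ε kills the maximal ideal
  have hεmax : ∀ z ∈ IsLocalRing.maximalIdeal (Localization.AtPrime Q'), ε z = 0 := by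
    intro z hz
    rw [← Localization.AtPrime.map_eq_maximalIdeal] at hz
    have hle : Ideal.map (algebraMap _ (Localization.AtPrime Q')) Q' ≤ RingHom.ker ε := by
      rw [Ideal.map_le_iff_le_comap]
      intro s hs
      obtain ⟨f, rfl⟩ := Ideal.Quotient.mk_surjective s
      have hf : e4 K m f = 0 := (hmemQ' f).mp hs
      simp only [Ideal.mem_comap, RingHom.mem_ker, hεa, he4q, hf, map_zero]
    exact hle hz
  -- ε ∘ χ is evaluation by e5
  have hεχ : ∀ f : MvPolynomial (Fin 5) K, ε (χ f) =
      algebraMap (Polynomial K) (FractionRing (Polynomial K)) (e5 K m f) := by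
    have hext : ε.comp (χ.toRingHom) =
        (algebraMap (Polynomial K) (FractionRing (Polynomial K))).comp (e5 K m).toRingHom := by
      apply MvPolynomial.ringHom_ext
      · intro k
        simp only [RingHom.comp_apply, AlgHom.toRingHom_eq_coe, RingHom.coe_coe]
        rw [← MvPolynomial.algebraMap_eq, AlgHom.commutes, AlgHom.commutes]
        rw [IsScalarTower.algebraMap_apply K (MvPolynomial (Fin 4) K ⧸ Jh)
          (Localization.AtPrime Q'), hεa, AlgHom.commutes]
      · intro i
        fin_cases i <;>
          simp only [RingHom.comp_apply, AlgHom.toRingHom_eq_coe, RingHom.coe_coe,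
            Fin.zero_eta, Fin.mk_one, Fin.reduceFinMk, hχ0, hχ1, hχ2, hχ3, hχ4]
        · rw [hG, RingHom.comp_apply, hεa, he4q]
          simp [e4, e5]
        · rw [map_mul, hW, hG, RingHom.comp_apply, hεa, he4q]
          have : e4 K m (X 1 ^ 2 * (X 1 ^ 2 + X 0 ^ m)) = 0 := by simp [e4]
          rw [this, map_zero, zero_mul]
          simp [e5]
        · rw [hG, RingHom.comp_apply, hεa, he4q]
          simp [e4, e5]
        · rw [hG, RingHom.comp_apply, hεa, he4q]
          simp [e4, e5]
        · rw [hG, RingHom.comp_apply, hεa, he4q]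
          simp [e4, e5]
    intro f
    exact DFunLike.congr_fun hext f
  -- χq inverts everything outside Q, giving Ψ
  have hχu : ∀ y : Q.primeCompl, IsUnit (χq.toRingHom y) := by
    rintro ⟨y, hy⟩
    obtain ⟨f, rfl⟩ := Ideal.Quotient.mk_surjective y
    simp only [AlgHom.toRingHom_eq_coe, RingHom.coe_coe, hχq]
    by_contra hnu
    have hmem : χ f ∈ IsLocalRing.maximalIdeal (Localization.AtPrime Q') :=
      (IsLocalRing.mem_maximalIdeal _).mpr hnu
    have h00 := hεmax _ hmem
    rw [hεχ] at h00
    have h5 : e5 K m f = 0 :=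
      (map_eq_zero_iff _ (IsFractionRing.injective (Polynomial K)
        (FractionRing (Polynomial K)))).mp h00
    exact hy ((hmemQ f).mpr h5)
  set Ψ : Localization.AtPrime Q →+* Localization.AtPrime Q' :=
    IsLocalization.lift (M := Q.primeCompl) (S := Localization.AtPrime Q) hχu with hΨ
  have hΨa : ∀ x, Ψ (algebraMap _ (Localization.AtPrime Q) x) = χq x := by
    intro x
    have h := IsLocalization.lift_eq (S := Localization.AtPrime Q) hχu x
    rw [hΨ]
    exact h
  -- translations of variables
  have htr0 : tr K (X 0 : MvPolynomial (Fin 4) K) = X 4 := by simp [tr]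
  have htr1 : tr K (X 1 : MvPolynomial (Fin 4) K) = X 0 := by simp [tr]
  have htr2 : tr K (X 2 : MvPolynomial (Fin 4) K) = X 2 := by simp [tr]
  have htr3 : tr K (X 3 : MvPolynomial (Fin 4) K) = X 3 := by simp [tr]
  have htrw : tr K (X 1 ^ 2 * (X 1 ^ 2 + X 0 ^ m) : MvPolynomial (Fin 4) K) =
      X 0 ^ 2 * (X 0 ^ 2 + X 4 ^ m) := by
    rw [map_mul, map_pow, map_add, map_pow, map_pow, htr0, htr1]
  have hbcR : Ideal.Quotient.mk I (X 0 ^ 2 * (X 0 ^ 2 + X 4 ^ m)) =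
      Ideal.Quotient.mk I (X 1 * X 2) :=
    Ideal.Quotient.eq.mpr (hI ▸ Ideal.subset_span (by simp))
  -- Φ ∘ Ψ = id
  have hcomp1 : Φ.comp Ψ = RingHom.id (Localization.AtPrime Q) := by
    refine IsLocalization.ringHom_ext Q.primeCompl ?_
    refine Ideal.Quotient.ringHom_ext ?_
    refine MvPolynomial.ringHom_ext ?_ ?_
    · intro k
      simp only [RingHom.comp_apply, RingHom.id_apply]
      rw [hΨa, hχq, ← MvPolynomial.algebraMap_eq, AlgHom.commutes,
        IsScalarTower.algebraMap_apply K (MvPolynomial (Fin 4) K ⧸ Jh) (Localization.AtPrime Q'),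
        hΦa, AlgHom.commutes]
      rw [← Ideal.Quotient.algebraMap_eq,
        ← IsScalarTower.algebraMap_apply K (MvPolynomial (Fin 5) K) (MvPolynomial (Fin 5) K ⧸ I),
        ← IsScalarTower.algebraMap_apply K (MvPolynomial (Fin 5) K ⧸ I) (Localization.AtPrime Q)]
    · intro i
      simp only [RingHom.comp_apply, RingHom.id_apply]
      rw [hΨa, hχq]
      fin_cases i <;>
        simp only [Fin.zero_eta, Fin.mk_one, Fin.reduceFinMk, hχ0, hχ1, hχ2, hχ3, hχ4]
      · rw [hG, RingHom.comp_apply, hΦa, hφq, htr1]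
      · rw [map_mul, hW, hG, RingHom.comp_apply, hΦa, hφq, htrw]
        have hΦc : Φ ((cu : Localization.AtPrime Q')) =
            algebraMap _ (Localization.AtPrime Q) (Ideal.Quotient.mk I (X 2)) := by
          rw [hcuv, hG, RingHom.comp_apply, hΦa, hφq, htr2]
        have hinv : Φ (↑cu⁻¹) *
            algebraMap _ (Localization.AtPrime Q) (Ideal.Quotient.mk I (X 2)) = 1 := by
          rw [← hΦc, ← map_mul, Units.inv_mul, map_one]
        refine unit_cancel' hcUnit.unit _ _ ?_
        rw [IsUnit.unit_spec, mul_assoc, hinv, mul_one, ← map_mul, ← map_mul]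
        exact congrArg _ (hbcR.trans (map_mul _ _ _))
      · rw [hG, RingHom.comp_apply, hΦa, hφq, htr2]
      · rw [hG, RingHom.comp_apply, hΦa, hφq, htr3]
      · rw [hG, RingHom.comp_apply, hΦa, hφq, htr0]
  -- Ψ ∘ Φ = id
  have hcomp2 : Ψ.comp Φ = RingHom.id (Localization.AtPrime Q') := by
    refine IsLocalization.ringHom_ext Q'.primeCompl ?_
    refine Ideal.Quotient.ringHom_ext ?_
    refine MvPolynomial.ringHom_ext ?_ ?_
    · intro k
      simp only [RingHom.comp_apply, RingHom.id_apply]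
      rw [hΦa, hφq, tr_C, hΨa, hχq, ← MvPolynomial.algebraMap_eq, AlgHom.commutes]
      rw [← MvPolynomial.algebraMap_eq, ← Ideal.Quotient.algebraMap_eq,
        ← IsScalarTower.algebraMap_apply K (MvPolynomial (Fin 4) K) (MvPolynomial (Fin 4) K ⧸ Jh),
        ← IsScalarTower.algebraMap_apply K (MvPolynomial (Fin 4) K ⧸ Jh)
          (Localization.AtPrime Q')]
    · intro i
      simp only [RingHom.comp_apply, RingHom.id_apply]
      fin_cases i <;> simp only [Fin.zero_eta, Fin.mk_one, Fin.reduceFinMk]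
      · rw [hΦa, hφq, htr0, hΨa, hχq, hχ4, hG, RingHom.comp_apply]
      · rw [hΦa, hφq, htr1, hΨa, hχq, hχ0, hG, RingHom.comp_apply]
      · rw [hΦa, hφq, htr2, hΨa, hχq, hχ2, hG, RingHom.comp_apply]
      · rw [hΦa, hφq, htr3, hΨa, hχq, hχ3, hG, RingHom.comp_apply]
  -- assemble the K-algebra equivalence
  have hcommK : ∀ k : K,
      (RingEquiv.ofRingHom Ψ Φ hcomp2 hcomp1) (algebraMap K (Localization.AtPrime Q) k) =
        algebraMap K (Localization.AtPrime Q') k := by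
    intro k
    show Ψ (algebraMap K (Localization.AtPrime Q) k) = _
    have hKk : algebraMap K (MvPolynomial (Fin 5) K ⧸ I) k = Ideal.Quotient.mk I (C k) := by
      rw [IsScalarTower.algebraMap_apply K (MvPolynomial (Fin 5) K) (MvPolynomial (Fin 5) K ⧸ I),
        MvPolynomial.algebraMap_eq, Ideal.Quotient.algebraMap_eq]
    rw [IsScalarTower.algebraMap_apply K (MvPolynomial (Fin 5) K ⧸ I) (Localization.AtPrime Q),
      hΨa, hKk, hχq, ← MvPolynomial.algebraMap_eq, AlgHom.commutes]
  exact ⟨AlgEquiv.ofRingEquiv (f := RingEquiv.ofRingHom Ψ Φ hcomp2 hcomp1) hcommK⟩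
end

section
/- Let K be a field and m, n positive integers. The ring R = K[A,B,C,D,T]/I, with I generated by the 2×2 minors of the matrix with rows (A²+T^m, B, D), (C, A², B^n - D), is an integral domain. -/
/-!
Variables `0, 1, 2, 3, 4` of `K[A, B, C, D, T]` stand for `A, B, C, D, T`, and `0, 1, 2` of
`K[a, b, t]` for `a, b, t`. The ideal is the kernel of the map to `Frac K[a, b, t]` that makes the
second row of the matrix `a²/b` times the first: `A ↦ a`, `B ↦ b`, `T ↦ t`,
`C ↦ a²(a² + tᵐ)/b` and `D ↦ bⁿ⁺¹/(a² + b)`. Hence it is prime.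

For the inclusion of the kernel in the ideal, `BC`, `CD` and `A²D` are the leading monomials of
the three generators for a suitable weight, so modulo the ideal every polynomial is a combination
of standard monomials, those divisible by none of the three. The images of the standard monomials
are linearly independent: after clearing the denominators `bᵏ (a² + b)ˡ`, the specialisation
`b = 0` isolates the terms of maximal `C`-degree, `b = -a²` those of maximal `D`-degree, and
what remains is a polynomial in `a, b, t`.
-/

open MvPolynomial

theorem MvPolynomial.monomial_add_mem_sup_of_reduction {σ R : Type*} [CommRing R]
    {I : Ideal (MvPolynomial σ R)} {N : Submodule R (MvPolynomial σ R)} (w : (σ →₀ ℕ) →+ ℕ)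
    {α ν : σ →₀ ℕ} {t : MvPolynomial σ R} (ht : t ∈ restrictSupport R {β | w β < w α})
    (hα : monomial α 1 - t ∈ I)
    (ih : ∀ β, w β < w (α + ν) → monomial β 1 ∈ N ⊔ I.restrictScalars R) :
    monomial (α + ν) 1 ∈ N ⊔ I.restrictScalars R := by
  have hlow : t * monomial ν 1 ∈ restrictSupport R {β | w β < w (α + ν)} := by
    have hν : monomial ν (1 : R) ∈ restrictSupport R {ν} :=
      (monomial_mem_restrictSupport R).2 (.inl rfl)
    refine restrictSupport_mono R ?_
      ((restrictSupport_add R _ _).symm ▸ Submodule.mul_mem_mul ht hν)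
    rintro _ ⟨β, hβ, _, rfl, rfl⟩
    simpa using hβ
  have hspan : restrictSupport R {β | w β < w (α + ν)} ≤ N ⊔ I.restrictScalars R := by
    rw [restrictSupport_eq_span, Submodule.span_le]
    rintro _ ⟨β, hβ, rfl⟩
    exact ih β hβ
  rw [show monomial (α + ν) (1 : R) = (monomial α 1 - t) * monomial ν 1 + t * monomial ν 1 by
    rw [sub_mul, sub_add_cancel, monomial_mul, one_mul]]
  exact add_mem (Submodule.mem_sup_right (I.mul_mem_right _ hα)) (hspan hlow)

theorem MvPolynomial.eq_zero_of_sum_C_mul_eq_zero {α σ R : Type*} [CommRing R] [IsDomain R]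
    {S : Finset α} {p : α → MvPolynomial σ R} {F : MvPolynomial σ R} (hF : F ≠ 0)
    (Q : α → Prop) [DecidablePred Q] {e : α → σ →₀ ℕ} (he : Set.InjOn e {i | i ∈ S ∧ Q i})
    {u : α → R} (hu : ∀ i, u i ≠ 0)
    (hp : ∀ i ∈ S, p i = if Q i then F * monomial (e i) (u i) else 0)
    {c : α → R} (h : ∑ i ∈ S, C (c i) * p i = 0) {i : α} (hi : i ∈ S) (hQ : Q i) : c i = 0 := by
  classical
  have hsum : ∑ i ∈ S, C (c i) * p i = F * ∑ i ∈ S with Q i, monomial (e i) (c i * u i) := by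
    rw [Finset.mul_sum, Finset.sum_filter]
    refine Finset.sum_congr rfl fun j hj => ?_
    rw [hp j hj]
    split_ifs
    · rw [mul_left_comm, C_mul_monomial]
    · rw [mul_zero]
  rw [hsum, mul_eq_zero, or_iff_right hF] at h
  have hcoeff := congrArg (coeff (e i)) h
  rw [coeff_sum, Finset.sum_eq_single_of_mem i (Finset.mem_filter.2 ⟨hi, hQ⟩), coeff_monomial,
    if_pos rfl, coeff_zero] at hcoeff
  · exact (mul_eq_zero.1 hcoeff).resolve_right (hu i)
  · intro j hj hji
    rw [coeff_monomial, if_neg fun hji' => hji (he (Finset.mem_filter.1 hj) ⟨hi, hQ⟩ hji')]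

namespace MinorsIdeal

open Finsupp

variable {K : Type*} [Field K] (m n : ℕ)

noncomputable def minorIdeal : Ideal (MvPolynomial (Fin 5) K) :=
  Ideal.span
    { (X 0 ^ 2) * (X 0 ^ 2 + X 4 ^ m) - X 1 * X 2,
      (X 0 ^ 2 + X 4 ^ m) * (X 1 ^ n - X 3) - X 2 * X 3,
      X 1 * (X 1 ^ n - X 3) - (X 0 ^ 2) * X 3 }

def IsStandard (μ : Fin 5 →₀ ℕ) : Prop :=
  ¬ single 1 1 + single 2 1 ≤ μ ∧ ¬ single 2 1 + single 3 1 ≤ μ ∧ ¬ single 0 2 + single 3 1 ≤ μ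

theorem isStandard_iff (μ : Fin 5 →₀ ℕ) :
    IsStandard μ ↔ (μ 1 = 0 ∨ μ 2 = 0) ∧ (μ 2 = 0 ∨ μ 3 = 0) ∧ (μ 0 ≤ 1 ∨ μ 3 = 0) := by
  simp only [IsStandard, le_def, Fin.forall_fin_succ, IsEmpty.forall_iff, Finsupp.coe_add,
    Pi.add_apply, single_apply, Fin.succ_zero_eq_one, Fin.succ_one_eq_two, Fin.reduceSucc,
    Fin.reduceEq, if_true, if_false, and_true]
  omega

-- `BC`, `CD` and `A²D` outweigh every other monomial of their generators.
noncomputable abbrev reductionWeight : (Fin 5 →₀ ℕ) →+ ℕ := weight ![2, 1, m + 10, n + 10, 1]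

theorem monomial_mem_restrictSupport_sup_minorIdeal (μ : Fin 5 →₀ ℕ) :
    monomial μ (1 : K) ∈
      restrictSupport K {μ | IsStandard μ} ⊔ (minorIdeal m n).restrictScalars K := by
  induction μ using (InvImage.wf (reductionWeight m n) wellFounded_lt).induction with
  | _ μ ih =>
  have hgen : ∀ {f}, f ∈ ({_, _, _} : Set (MvPolynomial (Fin 5) K)) → -f ∈ minorIdeal m n :=
    fun hf => neg_mem (Ideal.subset_span hf)
  by_cases hBC : single 1 1 + single 2 1 ≤ μ
  · obtain ⟨ν, rfl⟩ := exists_add_of_le hBC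
    refine monomial_add_mem_sup_of_reduction _
      (t := monomial (single 0 4) 1 + monomial (single 0 2 + single 4 m) 1) ?_ ?_ ih
    · refine add_mem ?_ ?_ <;>
      simp only [monomial_mem_restrictSupport, Set.mem_ofPred_eq, one_ne_zero, or_false,
        map_add, weight_single, smul_eq_mul, Matrix.cons_val] <;> omega
    · convert hgen (Or.inl rfl) using 1
      simp only [monomial_add_single, ← X_pow_eq_monomial]
      ring
  by_cases hCD : single 2 1 + single 3 1 ≤ μ
  · obtain ⟨ν, rfl⟩ := exists_add_of_le hCD
    refine monomial_add_mem_sup_of_reduction _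
      (t := monomial (single 0 2 + single 1 n) 1 - monomial (single 0 2 + single 3 1) 1
        + monomial (single 4 m + single 1 n) 1 - monomial (single 4 m + single 3 1) 1) ?_ ?_ ih
    · refine sub_mem (add_mem (sub_mem ?_ ?_) ?_) ?_ <;>
      simp only [monomial_mem_restrictSupport, Set.mem_ofPred_eq, one_ne_zero, or_false,
        map_add, weight_single, smul_eq_mul, Matrix.cons_val] <;> omega
    · convert hgen (Or.inr (Or.inl rfl)) using 1
      simp only [monomial_add_single, ← X_pow_eq_monomial]
      ring
  by_cases hAAD : single 0 2 + single 3 1 ≤ μ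
  · obtain ⟨ν, rfl⟩ := exists_add_of_le hAAD
    refine monomial_add_mem_sup_of_reduction _
      (t := monomial (single 1 (n + 1)) 1 - monomial (single 1 1 + single 3 1) 1) ?_ ?_ ih
    · refine sub_mem ?_ ?_ <;>
      simp only [monomial_mem_restrictSupport, Set.mem_ofPred_eq, one_ne_zero, or_false,
        map_add, weight_single, smul_eq_mul, Matrix.cons_val] <;> omega
    · convert hgen (Or.inr (Or.inr rfl)) using 1
      simp only [monomial_add_single, ← X_pow_eq_monomial]
      ring
  exact Submodule.mem_sup_left ((monomial_mem_restrictSupport K).2 (.inl ⟨hBC, hCD, hAAD⟩))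

theorem restrictSupport_sup_minorIdeal_eq_top :
    restrictSupport K {μ | IsStandard μ} ⊔ (minorIdeal m n).restrictScalars K = ⊤ := by
  rw [eq_top_iff, ← restrictSupport_univ, restrictSupport_eq_span, Submodule.span_le]
  rintro _ ⟨μ, -, rfl⟩
  exact monomial_mem_restrictSupport_sup_minorIdeal m n μ

local notation "ι" => algebraMap (MvPolynomial (Fin 3) K) (FractionRing (MvPolynomial (Fin 3) K))

noncomputable def param : MvPolynomial (Fin 5) K →ₐ[K] FractionRing (MvPolynomial (Fin 3) K) :=
  aeval ![ι (X 0), ι (X 1), ι (X 0 ^ 2 * (X 0 ^ 2 + X 2 ^ m)) / ι (X 1),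
    ι (X 1 ^ (n + 1)) / ι (X 0 ^ 2 + X 1), ι (X 2)]

theorem algebraMap_ne_zero {p : MvPolynomial (Fin 3) K} (hp : p ≠ 0) : ι p ≠ 0 :=
  (map_ne_zero_iff _ (IsFractionRing.injective _ _)).2 hp

theorem X_zero_sq_add_X_one_ne_zero : (X 0 ^ 2 + X 1 : MvPolynomial (Fin 3) K) ≠ 0 := by
  intro h
  simpa using congrArg (eval ![0, 1, 0]) h

theorem X_zero_sq_add_X_two_pow_ne_zero : (X 0 ^ 2 + X 2 ^ m : MvPolynomial (Fin 3) K) ≠ 0 := by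
  intro h
  simpa [coeff_X_pow, single_eq_single_iff] using congrArg (coeff (single 0 2)) h

theorem minorIdeal_le_ker_param : minorIdeal m n ≤ RingHom.ker (param (K := K) m n) := by
  have hb := algebraMap_ne_zero (X_ne_zero (R := K) (1 : Fin 3))
  have hab := algebraMap_ne_zero (X_zero_sq_add_X_one_ne_zero (K := K))
  rw [map_add, map_pow] at hab
  rw [minorIdeal, Ideal.span_le]
  rintro _ (rfl | rfl | rfl) <;>
  · simp only [SetLike.mem_coe, RingHom.mem_ker, param, map_sub, map_mul, map_add, map_pow,
      aeval_X, Matrix.cons_val]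
    field_simp
    ring

noncomputable def clearedMonomial (k l : ℕ) (μ : Fin 5 →₀ ℕ) : MvPolynomial (Fin 3) K :=
  X 0 ^ μ 0 * X 1 ^ μ 1 * (X 0 ^ 2 * (X 0 ^ 2 + X 2 ^ m)) ^ μ 2 * (X 1 ^ (n + 1)) ^ μ 3 *
    X 2 ^ μ 4 * X 1 ^ (k - μ 2) * (X 0 ^ 2 + X 1) ^ (l - μ 3)

theorem param_monomial_mul {k l : ℕ} {μ : Fin 5 →₀ ℕ} (h2 : μ 2 ≤ k) (h3 : μ 3 ≤ l) :
    param m n (monomial μ 1) * (ι (X 1) ^ k * ι (X 0 ^ 2 + X 1) ^ l) =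
      ι (clearedMonomial (K := K) m n k l μ) := by
  have hb := algebraMap_ne_zero (X_ne_zero (R := K) (1 : Fin 3))
  have hab := algebraMap_ne_zero (X_zero_sq_add_X_one_ne_zero (K := K))
  rw [map_add, map_pow] at hab
  obtain ⟨k, rfl⟩ := exists_add_of_le h2
  obtain ⟨l, rfl⟩ := exists_add_of_le h3
  simp only [param, clearedMonomial, aeval_monomial, prod_fintype _ _ (fun _ => pow_zero _),
    Fin.prod_univ_five, add_tsub_cancel_left, Matrix.cons_val, map_mul, map_pow, map_one,
    one_mul, div_pow, pow_add]
  field_simp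

theorem param_mul_eq_algebraMap_sum {G : MvPolynomial (Fin 5) K} {k l : ℕ}
    (hG : ∀ μ ∈ G.support, μ 2 ≤ k ∧ μ 3 ≤ l) :
    param m n G * (ι (X 1) ^ k * ι (X 0 ^ 2 + X 1) ^ l) =
      ι (∑ μ ∈ G.support, C (coeff μ G) * clearedMonomial m n k l μ) := by
  conv_lhs => rw [G.as_sum]
  simp only [map_sum, Finset.sum_mul, map_mul]
  refine Finset.sum_congr rfl fun μ hμ => ?_
  rw [← mul_one (coeff μ G), ← C_mul_monomial, mul_one, map_mul, mul_assoc,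
    param_monomial_mul m n (hG μ hμ).1 (hG μ hμ).2, ← algebraMap_eq, AlgHom.commutes,
    IsScalarTower.algebraMap_apply K (MvPolynomial (Fin 3) K), algebraMap_eq]

section Independence

variable {S : Finset (Fin 5 →₀ ℕ)} {c : (Fin 5 →₀ ℕ) → K} {k l : ℕ}

-- At `b = 0` only the terms with `μ 2 = k` survive, as distinct monomials in `a, t`.
theorem coeff_eq_zero_of_sum_clearedMonomial_eq_zero_of_apply_two_eq
    (hS : ∀ μ ∈ S, IsStandard μ ∧ μ 2 ≤ k ∧ μ 3 ≤ l) (hk : 0 < k)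
    (h : ∑ μ ∈ S, C (c μ) * clearedMonomial m n k l μ = 0)
    {μ : Fin 5 →₀ ℕ} (hμ : μ ∈ S) (h2 : μ 2 = k) : c μ = 0 := by
  let ψ : MvPolynomial (Fin 3) K →ₐ[K] MvPolynomial (Fin 3) K := aeval ![X 0, 0, X 2]
  replace h := congrArg ψ h
  simp only [map_sum, map_mul, algHom_C, algebraMap_eq, map_zero] at h
  refine eq_zero_of_sum_C_mul_eq_zero (F := (X 0 ^ 2 * (X 0 ^ 2 + X 2 ^ m)) ^ k * (X 0 ^ 2) ^ l)
    ?_ (· 2 = k) (e := fun μ => single 0 (μ 0) + single 2 (μ 4)) (u := 1) ?_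
    (fun _ => one_ne_zero) ?_ h hμ h2
  · exact mul_ne_zero (pow_ne_zero _ (mul_ne_zero (pow_ne_zero _ (X_ne_zero _))
      (X_zero_sq_add_X_two_pow_ne_zero m))) (pow_ne_zero _ (pow_ne_zero _ (X_ne_zero _)))
  · rintro μ ⟨hμ, hμ2 : μ 2 = k⟩ ν ⟨hν, hν2 : ν 2 = k⟩ he
    have h0 : μ 0 = ν 0 := by simpa using congrArg (· 0) he
    have h4 : μ 4 = ν 4 := by simpa using congrArg (· 2) he
    have := (isStandard_iff μ).1 (hS μ hμ).1
    have := (isStandard_iff ν).1 (hS ν hν).1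
    ext i
    fin_cases i <;> dsimp only [Fin.reduceFinMk, Fin.zero_eta, Fin.mk_one] <;> omega
  · intro ν hν
    obtain ⟨hstd, hνk, -⟩ := hS ν hν
    rw [isStandard_iff] at hstd
    simp only [clearedMonomial, ψ, map_mul, map_pow, map_add, aeval_X, Matrix.cons_val, add_zero]
    split_ifs with hν2
    · obtain ⟨h1, h3⟩ : ν 1 = 0 ∧ ν 3 = 0 := by omega
      simp only [h1, h3, hν2, Nat.sub_self, tsub_zero, pow_zero, Pi.one_apply,
        monomial_add_single, ← X_pow_eq_monomial]
      ring
    · rw [zero_pow (by omega : k - ν 2 ≠ 0), mul_zero, zero_mul]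

-- At `b = -a²` only the terms with `μ 3 = l` survive; as `μ 0 ≤ 1` for them, the exponent
-- `μ 0 + 2 μ 1` of `a` still determines `μ`.
theorem coeff_eq_zero_of_sum_clearedMonomial_eq_zero_of_apply_three_eq
    (hS : ∀ μ ∈ S, IsStandard μ ∧ μ 2 = 0 ∧ μ 3 ≤ l) (hl : 0 < l)
    (h : ∑ μ ∈ S, C (c μ) * clearedMonomial m n 0 l μ = 0)
    {μ : Fin 5 →₀ ℕ} (hμ : μ ∈ S) (h3 : μ 3 = l) : c μ = 0 := by
  let ψ : MvPolynomial (Fin 3) K →ₐ[K] MvPolynomial (Fin 3) K := aeval ![X 0, -X 0 ^ 2, X 2]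
  replace h := congrArg ψ h
  simp only [map_sum, map_mul, algHom_C, algebraMap_eq, map_zero] at h
  refine eq_zero_of_sum_C_mul_eq_zero (F := ((-X 0 ^ 2) ^ (n + 1)) ^ l)
    (pow_ne_zero _ (pow_ne_zero _ (neg_ne_zero.2 (pow_ne_zero _ (X_ne_zero _))))) (· 3 = l)
    (e := fun μ => single 0 (μ 0 + 2 * μ 1) + single 2 (μ 4)) (u := fun μ => (-1) ^ μ 1) ?_
    (fun _ => pow_ne_zero _ (neg_ne_zero.2 one_ne_zero)) ?_ h hμ h3
  · rintro μ ⟨hμ, hμ3 : μ 3 = l⟩ ν ⟨hν, hν3 : ν 3 = l⟩ he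
    have h0 : μ 0 + 2 * μ 1 = ν 0 + 2 * ν 1 := by simpa using congrArg (· 0) he
    have h4 : μ 4 = ν 4 := by simpa using congrArg (· 2) he
    have := (isStandard_iff μ).1 (hS μ hμ).1
    have := (isStandard_iff ν).1 (hS ν hν).1
    have := (hS μ hμ).2
    have := (hS ν hν).2
    ext i
    fin_cases i <;> dsimp only [Fin.reduceFinMk, Fin.zero_eta, Fin.mk_one] <;> omega
  · intro ν hν
    obtain ⟨-, hν2, hν3⟩ := hS ν hν
    simp only [clearedMonomial, ψ, map_mul, map_pow, map_add, aeval_X, Matrix.cons_val,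
      add_neg_cancel, hν2, pow_zero, mul_one]
    split_ifs with hν3
    · simp only [hν3, Nat.sub_self, pow_zero, mul_one, monomial_add_single,
        ← C_mul_X_pow_eq_monomial, map_pow, map_neg, map_one]
      ring
    · rw [zero_pow (by omega : l - ν 3 ≠ 0), mul_zero]

theorem coeff_eq_zero_of_sum_clearedMonomial_eq_zero
    (hS : ∀ μ ∈ S, μ 2 = 0 ∧ μ 3 = 0) (h : ∑ μ ∈ S, C (c μ) * clearedMonomial m n 0 0 μ = 0)
    {μ : Fin 5 →₀ ℕ} (hμ : μ ∈ S) : c μ = 0 := by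
  refine eq_zero_of_sum_C_mul_eq_zero one_ne_zero (fun _ => True)
    (e := fun μ => single 0 (μ 0) + single 1 (μ 1) + single 2 (μ 4)) (u := 1) ?_
    (fun _ => one_ne_zero) ?_ h hμ trivial
  · rintro μ ⟨hμ, -⟩ ν ⟨hν, -⟩ he
    have h0 : μ 0 = ν 0 := by simpa using congrArg (· 0) he
    have h1 : μ 1 = ν 1 := by simpa using congrArg (· 1) he
    have h4 : μ 4 = ν 4 := by simpa using congrArg (· 2) he
    have := hS μ hμ
    have := hS ν hν
    ext i
    fin_cases i <;> dsimp only [Fin.reduceFinMk, Fin.zero_eta, Fin.mk_one] <;> omega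
  · intro ν hν
    obtain ⟨hν2, hν3⟩ := hS ν hν
    simp only [clearedMonomial, hν2, hν3, if_true, one_mul, Nat.sub_self, pow_zero, mul_one,
      Pi.one_apply, monomial_add_single, ← X_pow_eq_monomial]

end Independence

theorem eq_zero_of_mem_restrictSupport_of_param_eq_zero {G : MvPolynomial (Fin 5) K}
    (hG : G ∈ restrictSupport K {μ | IsStandard μ}) (h : param m n G = 0) : G = 0 := by
  by_contra hG0
  have hne : G.support.Nonempty := support_nonempty.2 hG0
  set k := G.support.sup (· 2)
  set l := G.support.sup (· 3)
  have hbd : ∀ μ ∈ G.support, IsStandard μ ∧ μ 2 ≤ k ∧ μ 3 ≤ l := fun μ hμ =>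
    ⟨hG hμ, Finset.le_sup (f := (· 2)) hμ, Finset.le_sup (f := (· 3)) hμ⟩
  have hsum : ∑ μ ∈ G.support, C (coeff μ G) * clearedMonomial m n k l μ = 0 := by
    rw [← map_eq_zero_iff ι (IsFractionRing.injective _ _),
      ← param_mul_eq_algebraMap_sum m n fun μ hμ => (hbd μ hμ).2, h, zero_mul]
  rcases Nat.eq_zero_or_pos k with hk | hk
  · rcases Nat.eq_zero_or_pos l with hl | hl
    · obtain ⟨μ, hμ⟩ := hne
      rw [hk, hl] at hsum
      refine MvPolynomial.mem_support_iff.1 hμ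
        (coeff_eq_zero_of_sum_clearedMonomial_eq_zero m n (fun ν hν => ?_) hsum hμ)
      have := hbd ν hν
      omega
    · obtain ⟨μ, hμ, hμl⟩ := Finset.exists_mem_eq_sup _ hne (· 3)
      rw [hk] at hsum
      refine MvPolynomial.mem_support_iff.1 hμ
        (coeff_eq_zero_of_sum_clearedMonomial_eq_zero_of_apply_three_eq m n (fun ν hν => ?_) hl
          hsum hμ hμl.symm)
      have := hbd ν hν
      exact ⟨this.1, by omega, this.2.2⟩
  · obtain ⟨μ, hμ, hμk⟩ := Finset.exists_mem_eq_sup _ hne (· 2)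
    exact MvPolynomial.mem_support_iff.1 hμ
      (coeff_eq_zero_of_sum_clearedMonomial_eq_zero_of_apply_two_eq m n hbd hk hsum hμ hμk.symm)

theorem ker_param : RingHom.ker (param (K := K) m n) = minorIdeal m n := by
  refine le_antisymm (fun G hG => ?_) (minorIdeal_le_ker_param m n)
  obtain ⟨y, hy, z, hz, rfl⟩ := Submodule.mem_sup.1
    ((restrictSupport_sup_minorIdeal_eq_top (K := K) m n).symm ▸ Submodule.mem_top (x := G))
  have hz' : param m n z = 0 := minorIdeal_le_ker_param m n hz
  rw [RingHom.mem_ker, map_add, hz', add_zero] at hG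
  rw [eq_zero_of_mem_restrictSupport_of_param_eq_zero m n hy hG, zero_add]
  exact hz

end MinorsIdeal

theorem stmt16_general (K : Type) [Field K] (m n : ℕ)
    (I : Ideal (MvPolynomial (Fin 5) K))
    (hI : I = Ideal.span
      { (X 0 ^ 2) * (X 0 ^ 2 + X 4 ^ m) - X 1 * X 2,
        (X 0 ^ 2 + X 4 ^ m) * (X 1 ^ n - X 3) - X 2 * X 3,
        X 1 * (X 1 ^ n - X 3) - (X 0 ^ 2) * X 3 }) :
    I.IsPrime := by
  rw [hI, ← MinorsIdeal.minorIdeal, ← MinorsIdeal.ker_param m n]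
  exact RingHom.ker_isPrime _

/-- the ideal I of 2×2 minors of ((A²+Tᵐ, B, D), (C, A², Bⁿ-D)) is prime,
i.e. R = K[A,B,C,D,T]/I (variables 0=A, 1=B, 2=C, 3=D, 4=T) is an integral domain. -/
theorem stmt16 (K : Type) [Field K] (m n : ℕ) (hm : 0 < m) (hn : 0 < n)
    (I : Ideal (MvPolynomial (Fin 5) K))
    (hI : I = Ideal.span
      { (X 0 ^ 2) * (X 0 ^ 2 + X 4 ^ m) - X 1 * X 2,
        (X 0 ^ 2 + X 4 ^ m) * (X 1 ^ n - X 3) - X 2 * X 3,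
        X 1 * (X 1 ^ n - X 3) - (X 0 ^ 2) * X 3 }) :
    I.IsPrime :=
  stmt16_general K m n I hI
end
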